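/- arXiv:1604.01529 — 10 statements merged into one kernel-verified Lean document; each statement's English description precedes it below -/
import Mathlib

section
/- A k-decision rule f on voting situations is a decision scoring rule if and only if f is neutral, consistent, and continuous. -/
open Finset

abbrev Vote (A : Type*) [Fintype A] := A ≃ Fin (Fintype.card A)

structure DecisionRule (A : Type*) [Fintype A] [DecidableEq A] (k : ℕ) (R : Type*) where
  F : (Vote A → R) → {C : Finset A // C.card = k} → {C : Finset A // C.card = k} → ℤ
  antisymm : ∀ P C1 C2, F P C1 C2 = - F P C2 C1
  mem_range : ∀ P C1 C2, F P C1 C2 = -1 ∨ F P C1 C2 = 0 ∨ F P C1 C2 = 1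

abbrev Committee (A : Type*) (k : ℕ) := {C : Finset A // C.card = k}

section Defs

variable {A : Type*} [Fintype A] [DecidableEq A] {k : ℕ}

/-- The set of positions occupied by the members of `C` in vote `π`. -/
def Vote.pos (π : Vote A) (C : Finset A) : Finset (Fin (Fintype.card A)) := C.image π

/-- The action of a candidate permutation on a vote. -/
def permVote (σ : Equiv.Perm A) (π : Vote A) : Vote A := σ.symm.trans π

/-- The action of a candidate permutation on a voting situation. -/
def permSitu {R : Type*} (σ : Equiv.Perm A) (P : Vote A → R) : Vote A → R :=
  fun π => P (σ.trans π)

/-- The action of a candidate permutation on a committee. -/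
def permComm (σ : Equiv.Perm A) (C : Committee A k) : Committee A k :=
  ⟨C.1.image σ, by rw [Finset.card_image_of_injective _ σ.injective]; exact C.2⟩

/-- Committee position `I` (weakly) dominates committee position `J`:
listing both increasingly, each element of `I` is at most the corresponding element of `J`. -/
def Dominates {m : ℕ} (I J : Finset (Fin m)) : Prop :=
  List.Forall₂ (· ≤ ·) (I.sort (· ≤ ·)) (J.sort (· ≤ ·))

namespace DecisionRule

variable {R : Type*} [AddCommMonoid R]

def Neutral (f : DecisionRule A k R) : Prop :=
  ∀ (σ : Equiv.Perm A) (P : Vote A → R) (C1 C2 : Committee A k),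
    f.F (permSitu σ P) (permComm σ C1) (permComm σ C2) = f.F P C1 C2

def Consistent (f : DecisionRule A k R) : Prop :=
  ∀ (P Q : Vote A → R) (C1 C2 : Committee A k),
    (f.F P C1 C2 = 1 → 0 ≤ f.F Q C1 C2 → f.F (P + Q) C1 C2 = 1) ∧
    (0 ≤ f.F P C1 C2 → 0 ≤ f.F Q C1 C2 → 0 ≤ f.F (P + Q) C1 C2)

def IsContinuous (f : DecisionRule A k R) : Prop :=
  ∀ (P1 P2 : Vote A → R) (C1 C2 : Committee A k),
    f.F P2 C1 C2 = 1 → ∃ n : ℕ, f.F (P1 + n • P2) C1 C2 = 1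

def Transitive (f : DecisionRule A k R) : Prop :=
  ∀ (P : Vote A → R) (C1 C2 C3 : Committee A k),
    0 ≤ f.F P C1 C2 → 0 ≤ f.F P C2 C3 → 0 ≤ f.F P C1 C3

end DecisionRule

def DecisionRule.CommitteeDominance {A : Type*} [Fintype A] [DecidableEq A] {k : ℕ}
    {R : Type*} [CommSemiring R] [PartialOrder R] [IsOrderedRing R] (f : DecisionRule A k R) : Prop :=
  ∀ (P : Vote A → R) (C1 C2 : Committee A k), (∀ π, 0 ≤ P π) →
    (∀ π, 0 < P π → Dominates (π.pos C1.1) (π.pos C2.1)) → 0 ≤ f.F P C1 C2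

/-- The `λ`-score of a committee `C` in an integer voting situation `P`. -/
noncomputable def scoreN (lam : Finset (Fin (Fintype.card A)) → ℝ) (C : Finset A)
    (P : Vote A → ℕ) : ℝ :=
  ∑ π : Vote A, (P π : ℝ) * lam (π.pos C)

end Defs

/-- The `d`-score of an ordered pair of committees in an integer voting situation. -/
noncomputable def pairScoreN {A : Type*} [Fintype A] [DecidableEq A]
    (d : Finset (Fin (Fintype.card A)) → Finset (Fin (Fintype.card A)) → ℝ)
    (C1 C2 : Finset A) (P : Vote A → ℕ) : ℝ :=
  ∑ π : Vote A, (P π : ℝ) * d (π.pos C1) (π.pos C2)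

/-- `f` is a decision scoring rule: there is a decision scoring function `d`
(antisymmetric on committee positions) such that weak social preference corresponds to a
nonnegative total pair score and social indifference corresponds to a zero total pair score. -/
noncomputable def DecisionRule.IsDecisionScoringRule {A : Type*} [Fintype A] [DecidableEq A]
    {k : ℕ} (f : DecisionRule A k ℕ) : Prop :=
  ∃ d : Finset (Fin (Fintype.card A)) → Finset (Fin (Fintype.card A)) → ℝ,
    (∀ I J : Finset (Fin (Fintype.card A)), I.card = k → J.card = k → d I J = - d J I) ∧
    ∀ (P : Vote A → ℕ) (C1 C2 : Committee A k),
      (0 ≤ f.F P C1 C2 ↔ 0 ≤ pairScoreN d C1.1 C2.1 P) ∧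
      (f.F P C1 C2 = 0 ↔ pairScoreN d C1.1 C2.1 P = 0)

/-!
A decision scoring rule is consistent and continuous because `d`-scores are additive in the
voting situation, and neutral because permuting candidates only relabels the votes.

Conversely, fix committees `C1`, `C2`. Consistency and continuity say that
`P ↦ sign f(P)(C1, C2)` is the sign of a total Archimedean preorder on voting situations.
Neutrality, applied to a permutation swapping `C1` and `C2`, makes the situation with every vote
once a tie, so the preorder extends to the group of integer-valued situations, and Hölder's
embedding of Archimedean ordered groups into `ℝ` writes `f(P)(C1, C2)` as the sign of a linear
form `∑ π, P π * λ_{C1,C2} π`. The scoring function `d I J = ∑ π, λ_{π⁻¹ I, π⁻¹ J} π` only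
sees positions, and by neutrality every term of its score has the sign of `f(P)(C1, C2)`.
-/

theorem SignType.eq_of_nonneg_iff_of_nonpos_iff {a b : SignType} (h₀ : 0 ≤ a ↔ 0 ≤ b)
    (h₁ : a ≤ 0 ↔ b ≤ 0) : a = b := by
  revert h₀ h₁; cases a <;> cases b <;> decide

theorem sign_eq_sign_iff {α β : Type*} [Zero α] [LinearOrder α] [Zero β] [LinearOrder β]
    {a : α} {b : β} :
    SignType.sign a = SignType.sign b ↔ (0 ≤ a ↔ 0 ≤ b) ∧ (a = 0 ↔ b = 0) := by
  rw [← sign_nonneg_iff, ← sign_nonneg_iff (a := b), ← sign_eq_zero_iff,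
    ← sign_eq_zero_iff (a := b)]
  generalize SignType.sign a = s
  generalize SignType.sign b = t
  cases s <;> cases t <;> decide

theorem sign_sub_eq_of_sign_eq_neg {α : Type*} [AddCommGroup α] [LinearOrder α]
    [IsOrderedAddMonoid α] {a b : α} {t : SignType} (ha : SignType.sign a = t)
    (hb : SignType.sign b = -t) : SignType.sign (a - b) = t := by
  subst ha
  rcases lt_trichotomy a 0 with h | h | h
  · rw [sign_neg h, neg_neg, sign_eq_one_iff] at hb
    rw [sign_neg h, sign_eq_neg_one_iff]
    exact sub_neg.2 (h.trans hb)
  · rw [h, sign_zero, neg_zero, sign_eq_zero_iff] at hb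
    rw [h, hb, sub_zero]
  · rw [sign_pos h, sign_eq_neg_one_iff] at hb
    rw [sign_pos h, sign_eq_one_iff]
    exact sub_pos.2 (hb.trans h)

namespace AddSubmonoid

variable {M : Type*} [AddCommGroup M] (P : AddSubmonoid M)

def lineality : AddSubgroup M where
  carrier := {x | x ∈ P ∧ -x ∈ P}
  add_mem' ha hb := ⟨P.add_mem ha.1 hb.1, by rw [neg_add]; exact P.add_mem ha.2 hb.2⟩
  zero_mem' := ⟨P.zero_mem, by rw [neg_zero]; exact P.zero_mem⟩
  neg_mem' ha := ⟨ha.2, by rw [neg_neg]; exact ha.1⟩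

theorem mk_mem_map_mk_lineality_iff (x : M) :
    (x : M ⧸ P.lineality) ∈ P.map (QuotientAddGroup.mk' P.lineality) ↔ x ∈ P := by
  refine ⟨?_, fun hx => ⟨x, hx, rfl⟩⟩
  rintro ⟨y, hy, hyx⟩
  have hN : -y + x ∈ P.lineality := QuotientAddGroup.eq.1 hyx
  simpa using P.add_mem hy hN.1

def quotientCone : AddGroupCone (M ⧸ P.lineality) where
  toAddSubmonoid := P.map (QuotientAddGroup.mk' P.lineality)
  eq_zero_of_mem_of_neg_mem' {a} := by
    induction a using QuotientAddGroup.induction_on with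
    | H x =>
      intro hx hnx
      rw [← QuotientAddGroup.mk_neg] at hnx
      exact (QuotientAddGroup.eq_zero_iff x).2
        ⟨(P.mk_mem_map_mk_lineality_iff x).1 hx, (P.mk_mem_map_mk_lineality_iff (-x)).1 hnx⟩

theorem mk_mem_quotientCone_iff (x : M) : (x : M ⧸ P.lineality) ∈ P.quotientCone ↔ x ∈ P :=
  P.mk_mem_map_mk_lineality_iff x

/-- Hölder's theorem for preorders: the quotient by the lineality space is an Archimedean
linearly ordered group, which embeds into `ℝ`. -/
theorem exists_addMonoidHom_real_nonneg_iff (total : ∀ x, x ∈ P ∨ -x ∈ P)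
    (arch : ∀ x y, -y ∉ P → ∃ n : ℕ, n • y - x ∈ P) :
    ∃ L : M →+ ℝ, ∀ x, 0 ≤ L x ↔ x ∈ P := by
  classical
  have : HasMemOrNegMem P.quotientCone := ⟨fun a => by
    induction a using QuotientAddGroup.induction_on with
    | H x =>
      rw [← QuotientAddGroup.mk_neg, mk_mem_quotientCone_iff, mk_mem_quotientCone_iff]
      exact total x⟩
  let : LinearOrder (M ⧸ P.lineality) := LinearOrder.mkOfAddGroupCone P.quotientCone
  have : IsOrderedAddMonoid (M ⧸ P.lineality) := IsOrderedAddMonoid.mkOfCone P.quotientCone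
  have le_iff : ∀ x y : M, (x : M ⧸ P.lineality) ≤ y ↔ y - x ∈ P := fun x y => by
    rw [← mk_mem_quotientCone_iff]; rfl
  have : Archimedean (M ⧸ P.lineality) := ⟨fun a b hb => by
    induction a using QuotientAddGroup.induction_on with
    | H x =>
    induction b using QuotientAddGroup.induction_on with
    | H y =>
      rw [← not_le, ← QuotientAddGroup.mk_zero, le_iff, zero_sub] at hb
      obtain ⟨n, hn⟩ := arch x y hb
      exact ⟨n, by rw [← QuotientAddGroup.mk_nsmul, le_iff]; exact hn⟩⟩
  obtain ⟨L, hL⟩ := Archimedean.exists_orderAddMonoidHom_real_injective (M ⧸ P.lineality)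
  refine ⟨L.toAddMonoidHom.comp (QuotientAddGroup.mk' P.lineality), fun x => ?_⟩
  have hmono : StrictMono L := L.monotone'.strictMono_of_injective hL
  change 0 ≤ L (x : M ⧸ P.lineality) ↔ x ∈ P
  rw [← map_zero L, hmono.le_iff_le, ← QuotientAddGroup.mk_zero, le_iff, sub_zero]

end AddSubmonoid

theorem exists_eq_natCast_sub {V : Type*} [Finite V] (x : V → ℤ) :
    ∃ (P : V → ℕ) (m : ℕ), x = fun v => (P v : ℤ) - m := by
  obtain ⟨m, hm⟩ := (Set.finite_range fun v => (x v).natAbs).bddAbove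
  refine ⟨fun v => (x v + m).toNat, m, funext fun v => ?_⟩
  have : (x v).natAbs ≤ m := hm ⟨v, rfl⟩
  dsimp only
  omega

structure IsConsistentSign {X : Type*} [AddCommMonoid X] (g : X → SignType) : Prop where
  add_of_eq_zero : ∀ x y, g y = 0 → g (x + y) = g x
  add_of_eq : ∀ x y, g x = g y → g (x + y) = g x
  exists_nsmul : ∀ x y, g y = 1 → ∃ n : ℕ, g (x + n • y) = 1

namespace IsConsistentSign

section Monoid

variable {X : Type*} [AddCommMonoid X] {g : X → SignType}

theorem eq_neg_of_add_eq_zero (hg : IsConsistentSign g) {x y : X} (h : g (x + y) = 0) :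
    g y = -g x := by
  by_cases hy : g y = 0
  · rw [hg.add_of_eq_zero x y hy] at h; rw [h, hy]; rfl
  by_cases hx : g x = 0
  · rw [add_comm, hg.add_of_eq_zero y x hx] at h; exact absurd h hy
  by_cases hxy : g x = g y
  · rw [hg.add_of_eq x y hxy] at h; exact absurd h hx
  revert hx hy hxy; cases g x <;> cases g y <;> decide

theorem add_nsmul_of_eq_zero (hg : IsConsistentSign g) {y : X} (hy : g y = 0) (x : X) (n : ℕ) :
    g (x + n • y) = g x := by
  induction n with
  | zero => rw [zero_smul, add_zero]
  | succ n ih => rw [succ_nsmul, ← add_assoc, hg.add_of_eq_zero _ _ hy, ih]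

theorem apply_zero (hg : IsConsistentSign g) {u : X} (hu : g u = 0) : g 0 = 0 := by
  have := hg.add_of_eq_zero 0 u hu
  rwa [zero_add, hu, eq_comm] at this

theorem nonneg_add (hg : IsConsistentSign g) {x y : X} (hx : 0 ≤ g x) (hy : 0 ≤ g y) :
    0 ≤ g (x + y) := by
  by_cases hy0 : g y = 0
  · rwa [hg.add_of_eq_zero x y hy0]
  by_cases hx0 : g x = 0
  · rwa [add_comm, hg.add_of_eq_zero y x hx0]
  have hxy : g x = g y := by
    revert hx hy hx0 hy0; cases g x <;> cases g y <;> decide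
  rwa [hg.add_of_eq x y hxy]

end Monoid

variable {V : Type*} {g : (V → ℕ) → SignType}

theorem eq_of_natCast_sub_eq (hg : IsConsistentSign g) (h1 : g 1 = 0) {P Q : V → ℕ} {m n : ℕ}
    (h : (fun v => (P v : ℤ) - m) = fun v => (Q v : ℤ) - n) : g P = g Q := by
  have hPQ : P + n • 1 = Q + m • 1 := funext fun v => by
    have := congrFun h v
    simp only [Pi.add_apply, Pi.smul_apply, Pi.one_apply, smul_eq_mul, mul_one]
    omega
  rw [← hg.add_nsmul_of_eq_zero h1 P n, hPQ, hg.add_nsmul_of_eq_zero h1]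

def cone (hg : IsConsistentSign g) (h1 : g 1 = 0) : AddSubmonoid (V → ℤ) where
  carrier := {x | ∃ (P : V → ℕ) (m : ℕ), x = (fun v => (P v : ℤ) - m) ∧ 0 ≤ g P}
  add_mem' := by
    rintro _ _ ⟨P, m, rfl, hP⟩ ⟨Q, n, rfl, hQ⟩
    refine ⟨P + Q, m + n, ?_, hg.nonneg_add hP hQ⟩
    ext v
    simp only [Pi.add_apply]
    push_cast
    ring
  zero_mem' := ⟨0, 0, by ext; simp, (hg.apply_zero h1).ge⟩

theorem mem_cone_iff (hg : IsConsistentSign g) (h1 : g 1 = 0) {P : V → ℕ} {m : ℕ} :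
    (fun v => (P v : ℤ) - m) ∈ hg.cone h1 ↔ 0 ≤ g P := by
  refine ⟨?_, fun hP => ⟨P, m, rfl, hP⟩⟩
  rintro ⟨Q, n, h, hQ⟩
  rwa [hg.eq_of_natCast_sub_eq h1 h]

theorem eq_neg_of_natCast_sub_eq_neg (hg : IsConsistentSign g) (h1 : g 1 = 0) {P Q : V → ℕ}
    {m n : ℕ} (h : (fun v => (Q v : ℤ) - n) = -fun v => (P v : ℤ) - m) : g Q = -g P := by
  refine hg.eq_neg_of_add_eq_zero ?_
  rw [← hg.apply_zero h1]
  refine hg.eq_of_natCast_sub_eq h1 (m := m + n) (n := 0) (funext fun v => ?_)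
  have := congrFun h v
  simp only [Pi.neg_apply, Pi.add_apply, Pi.zero_apply] at this ⊢
  push_cast
  linarith

theorem mem_or_neg_mem_cone [Finite V] (hg : IsConsistentSign g) (h1 : g 1 = 0) (x : V → ℤ) :
    x ∈ hg.cone h1 ∨ -x ∈ hg.cone h1 := by
  obtain ⟨P, m, rfl⟩ := exists_eq_natCast_sub x
  obtain ⟨Q, n, hQ⟩ := exists_eq_natCast_sub (-fun v => (P v : ℤ) - m)
  rw [hQ, hg.mem_cone_iff, hg.mem_cone_iff, hg.eq_neg_of_natCast_sub_eq_neg h1 hQ.symm]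
  cases g P <;> decide

theorem exists_nsmul_sub_mem_cone [Finite V] (hg : IsConsistentSign g) (h1 : g 1 = 0)
    (x : V → ℤ) {y : V → ℤ} (hy : -y ∉ hg.cone h1) : ∃ n : ℕ, n • y - x ∈ hg.cone h1 := by
  obtain ⟨Q, m, rfl⟩ := exists_eq_natCast_sub y
  obtain ⟨Q', m', hQ'⟩ := exists_eq_natCast_sub (-fun v => (Q v : ℤ) - m)
  obtain ⟨R, r, hR⟩ := exists_eq_natCast_sub (-x)
  have hQ1 : g Q = 1 := by
    rw [hQ', hg.mem_cone_iff, hg.eq_neg_of_natCast_sub_eq_neg h1 hQ'.symm] at hy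
    revert hy; cases g Q <;> decide
  obtain ⟨n, hn⟩ := hg.exists_nsmul R Q hQ1
  have : n • (fun v => (Q v : ℤ) - m) - x =
      fun v => ((R + n • Q) v : ℤ) - (r + n * m : ℕ) := by
    ext v
    have := congrFun hR v
    simp only [Pi.neg_apply] at this
    simp only [Pi.sub_apply, Pi.smul_apply, Pi.add_apply]
    push_cast [nsmul_eq_mul]
    linear_combination this
  exact ⟨n, by rw [this, hg.mem_cone_iff, hn]; decide⟩

theorem exists_sign_eq_sum_mul [Fintype V] (hg : IsConsistentSign g) (h1 : g 1 = 0) :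
    ∃ lam : V → ℝ, ∀ P, g P = SignType.sign (∑ v, (P v : ℝ) * lam v) := by
  classical
  obtain ⟨L, hL⟩ := (hg.cone h1).exists_addMonoidHom_real_nonneg_iff (hg.mem_or_neg_mem_cone h1)
    fun x _ => hg.exists_nsmul_sub_mem_cone h1 x
  set lam : V → ℝ := fun v => L fun w => if v = w then 1 else 0
  have hL_sum : ∀ x, L x = ∑ v, (x v : ℝ) * lam v := fun x => by
    simpa [zsmul_eq_mul] using LinearMap.pi_apply_eq_sum_univ L.toIntLinearMap x
  refine ⟨lam, fun P => ?_⟩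
  obtain ⟨Q, n, hQ⟩ := exists_eq_natCast_sub (-fun v => (P v : ℤ) - (0 : ℕ))
  have h_nonneg : 0 ≤ g P ↔ 0 ≤ ∑ v, (P v : ℝ) * lam v := by
    rw [← hg.mem_cone_iff h1 (m := 0), ← hL, hL_sum]
    simp
  have h_nonpos : g P ≤ 0 ↔ ∑ v, (P v : ℝ) * lam v ≤ 0 := by
    have : 0 ≤ g Q ↔ g P ≤ 0 := by
      rw [hg.eq_neg_of_natCast_sub_eq_neg h1 hQ.symm]; cases g P <;> decide
    rw [← this, ← hg.mem_cone_iff h1, ← hQ, ← hL, hL_sum]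
    simp [Finset.sum_neg_distrib]
  exact SignType.eq_of_nonneg_iff_of_nonpos_iff (h_nonneg.trans sign_nonneg_iff.symm)
    (h_nonpos.trans sign_nonpos_iff.symm)

end IsConsistentSign

theorem Finset.exists_perm_image_swap {α : Type*} [DecidableEq α] {s t : Finset α}
    (h : s.card = t.card) : ∃ σ : Equiv.Perm α, s.image σ = t ∧ t.image σ = s := by
  let e : (s \ t : Finset α) ≃ (t \ s : Finset α) := Finset.equivOfCardEq (card_sdiff_comm h)
  let f : (s \ t : Finset α) ⊕ (t \ s : Finset α) ⊕ (s ∩ t : Finset α) → α :=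
    Sum.elim (↑) (Sum.elim (↑) (↑))
  let g : (s \ t : Finset α) ⊕ (t \ s : Finset α) ⊕ (s ∩ t : Finset α) → α :=
    Sum.elim (fun x => e x) (Sum.elim (fun x => e.symm x) (↑))
  have hf : Function.Injective f := by
    refine Subtype.val_injective.sumElim (Subtype.val_injective.sumElim Subtype.val_injective
      fun a b => ?_) fun a b => ?_
    · have := a.2; have := b.2; grind
    · rcases b with b | b <;> (have := a.2; have := b.2; grind)
  have hg : Function.Injective g := by
    refine (Subtype.val_injective.comp e.injective).sumElim
      ((Subtype.val_injective.comp e.symm.injective).sumElim Subtype.val_injective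
      fun a b => ?_) fun a b => ?_
    · have := (e.symm a).2; have := b.2; grind
    · rcases b with b | b
      · have := (e a).2; have := (e.symm b).2; grind
      · have := (e a).2; have := b.2; grind
  obtain ⟨σ, hσ⟩ := Equiv.Perm.exists_extending_pair f g hf hg
  have image_eq : ∀ {u v : Finset α}, u.card = v.card →
      (∀ a ∈ u, a ∈ v → σ a = a) → (∀ a ∈ u \ v, σ a ∈ v) → u.image σ = v := by
    intro u v huv hfix hmove
    refine Finset.eq_of_subset_of_card_le (fun b hb => ?_) ?_
    · obtain ⟨a, ha, rfl⟩ := Finset.mem_image.1 hb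
      by_cases hav : a ∈ v
      · rwa [hfix a ha hav]
      · exact hmove a (Finset.mem_sdiff.2 ⟨ha, hav⟩)
    · rw [Finset.card_image_of_injective _ σ.injective, huv]
  refine ⟨σ, image_eq h (fun a ha hat => hσ (.inr (.inr ⟨a, mem_inter.2 ⟨ha, hat⟩⟩)))
      fun a ha => ?_,
    image_eq h.symm (fun a ha has => hσ (.inr (.inr ⟨a, mem_inter.2 ⟨has, ha⟩⟩))) fun a ha => ?_⟩
  · rw [show a = f (.inl ⟨a, ha⟩) from rfl, hσ]
    exact (Finset.mem_sdiff.1 (e ⟨a, ha⟩).2).1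
  · rw [show a = f (.inr (.inl ⟨a, ha⟩)) from rfl, hσ]
    exact (Finset.mem_sdiff.1 (e.symm ⟨a, ha⟩).2).1

section Vote

variable {A : Type*} [Fintype A] [DecidableEq A]

theorem Vote.sum_trans_left (σ : Equiv.Perm A) (G : Vote A → ℝ) :
    ∑ π : Vote A, G (σ.trans π) = ∑ π, G π :=
  Fintype.sum_equiv (σ.symm.equivCongr (Equiv.refl _)) _ _ fun π => by congr 1

theorem Vote.sum_perm_trans (ρ : Vote A) (G : Vote A → ℝ) :
    ∑ σ : Equiv.Perm A, G (σ.trans ρ) = ∑ π, G π :=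
  Fintype.sum_equiv ((Equiv.refl _).equivCongr ρ) _ _ fun σ => by congr 1

end Vote

section PairScore

variable {A : Type*} [Fintype A] [DecidableEq A]
  (d : Finset (Fin (Fintype.card A)) → Finset (Fin (Fintype.card A)) → ℝ) (C1 C2 : Finset A)

theorem pairScoreN_add (P Q : Vote A → ℕ) :
    pairScoreN d C1 C2 (P + Q) = pairScoreN d C1 C2 P + pairScoreN d C1 C2 Q := by
  simp only [pairScoreN, Pi.add_apply, Nat.cast_add, add_mul, Finset.sum_add_distrib]

theorem pairScoreN_add_nsmul (P Q : Vote A → ℕ) (n : ℕ) :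
    pairScoreN d C1 C2 (P + n • Q) = pairScoreN d C1 C2 P + n * pairScoreN d C1 C2 Q := by
  simp only [pairScoreN, Pi.add_apply, Pi.smul_apply, smul_eq_mul, Nat.cast_add, Nat.cast_mul,
    add_mul, mul_assoc, Finset.sum_add_distrib, Finset.mul_sum]

theorem pairScoreN_permSitu (σ : Equiv.Perm A) (P : Vote A → ℕ) :
    pairScoreN d (C1.image σ) (C2.image σ) (permSitu σ P) = pairScoreN d C1 C2 P := by
  unfold pairScoreN
  conv_rhs => rw [← Vote.sum_trans_left σ]
  simp only [permSitu, Vote.pos, Finset.image_image, Equiv.coe_trans]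

end PairScore

noncomputable def averagedScoring {A : Type*} [Fintype A] [DecidableEq A]
    (lam : Finset A → Finset A → Vote A → ℝ) (I J : Finset (Fin (Fintype.card A))) : ℝ :=
  ∑ π : Vote A, lam (I.image π.symm) (J.image π.symm) π

section AveragedScoring

variable {A : Type*} [Fintype A] [DecidableEq A] (lam : Finset A → Finset A → Vote A → ℝ)

theorem averagedScoring_antisymm (hlam : ∀ C1 C2, lam C2 C1 = -lam C1 C2)
    (I J : Finset (Fin (Fintype.card A))) :
    averagedScoring lam I J = -averagedScoring lam J I := by
  simp only [averagedScoring, hlam (J.image _), Pi.neg_apply, Finset.sum_neg_distrib]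

theorem pairScoreN_averagedScoring (D1 D2 : Finset A) (P : Vote A → ℕ) :
    pairScoreN (averagedScoring lam) D1 D2 P =
      ∑ σ : Equiv.Perm A, ∑ π, ((permSitu σ.symm P π : ℕ) : ℝ) *
        lam (D1.image σ.symm) (D2.image σ.symm) π := by
  have image_trans_symm : ∀ (σ : Equiv.Perm A) (ρ : Vote A) (D : Finset A),
      (D.image ρ).image (σ.trans ρ).symm = D.image σ.symm := fun σ ρ D => by
    rw [Finset.image_image]; congr 1; ext a; simp
  calc pairScoreN (averagedScoring lam) D1 D2 P
      = ∑ ρ : Vote A, ∑ σ : Equiv.Perm A, (P ρ : ℝ) *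
          lam (D1.image σ.symm) (D2.image σ.symm) (σ.trans ρ) := by
        refine Finset.sum_congr rfl fun ρ _ => ?_
        rw [averagedScoring, ← Vote.sum_perm_trans ρ, Finset.mul_sum]
        simp only [Vote.pos, image_trans_symm]
    _ = _ := by
        rw [Finset.sum_comm]
        refine Finset.sum_congr rfl fun σ _ => ?_
        rw [← Vote.sum_trans_left σ.symm]
        simp [permSitu, ← Equiv.trans_assoc]

end AveragedScoring

namespace DecisionRule

variable {A : Type*} [Fintype A] [DecidableEq A] {k : ℕ} (f : DecisionRule A k ℕ)

theorem F_eq_of_sign_eq {P Q : Vote A → ℕ} {C1 C2 D1 D2 : Committee A k}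
    (h : SignType.sign (f.F P C1 C2) = SignType.sign (f.F Q D1 D2)) :
    f.F P C1 C2 = f.F Q D1 D2 := by
  rcases f.mem_range P C1 C2 with h1 | h1 | h1 <;>
    rcases f.mem_range Q D1 D2 with h2 | h2 | h2 <;> simp_all

theorem F_eq_one_iff_sign (P : Vote A → ℕ) (C1 C2 : Committee A k) :
    f.F P C1 C2 = 1 ↔ SignType.sign (f.F P C1 C2) = 1 := by
  rw [sign_eq_one_iff]
  have := f.mem_range P C1 C2
  omega

theorem isDecisionScoringRule_iff_exists_sign_eq :
    f.IsDecisionScoringRule ↔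
      ∃ d : Finset (Fin (Fintype.card A)) → Finset (Fin (Fintype.card A)) → ℝ,
        (∀ I J : Finset (Fin (Fintype.card A)), I.card = k → J.card = k → d I J = -d J I) ∧
        ∀ (P : Vote A → ℕ) (C1 C2 : Committee A k),
          SignType.sign (f.F P C1 C2) = SignType.sign (pairScoreN d C1.1 C2.1 P) := by
  simp only [IsDecisionScoringRule, sign_eq_sign_iff]

section OfScoring

variable {f} {d : Finset (Fin (Fintype.card A)) → Finset (Fin (Fintype.card A)) → ℝ}

theorem neutral_of_sign_eq (hd : ∀ P C1 C2,
    SignType.sign (f.F P C1 C2) = SignType.sign (pairScoreN d C1.1 C2.1 P)) : f.Neutral := by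
  intro σ P C1 C2
  refine f.F_eq_of_sign_eq ?_
  rw [hd, hd]
  exact congrArg _ (pairScoreN_permSitu d C1.1 C2.1 σ P)

theorem consistent_of_sign_eq (hd : ∀ P C1 C2,
    SignType.sign (f.F P C1 C2) = SignType.sign (pairScoreN d C1.1 C2.1 P)) : f.Consistent := by
  intro P Q C1 C2
  have hP := hd P C1 C2
  have hQ := hd Q C1 C2
  have hPQ := hd (P + Q) C1 C2
  rw [pairScoreN_add] at hPQ
  have nonneg_iff : ∀ R, 0 ≤ f.F R C1 C2 ↔ 0 ≤ pairScoreN d C1.1 C2.1 R := fun R => by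
    rw [← sign_nonneg_iff, hd, sign_nonneg_iff]
  constructor
  · intro h1 h2
    rw [f.F_eq_one_iff_sign, hP, sign_eq_one_iff] at h1
    rw [f.F_eq_one_iff_sign, hPQ, sign_eq_one_iff]
    linarith [(nonneg_iff Q).1 h2]
  · intro h1 h2
    rw [nonneg_iff, pairScoreN_add]
    linarith [(nonneg_iff P).1 h1, (nonneg_iff Q).1 h2]

theorem isContinuous_of_sign_eq (hd : ∀ P C1 C2,
    SignType.sign (f.F P C1 C2) = SignType.sign (pairScoreN d C1.1 C2.1 P)) :
    f.IsContinuous := by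
  intro P1 P2 C1 C2 h
  rw [f.F_eq_one_iff_sign, hd, sign_eq_one_iff] at h
  obtain ⟨n, hn⟩ := exists_nat_gt (-pairScoreN d C1.1 C2.1 P1 / pairScoreN d C1.1 C2.1 P2)
  refine ⟨n, ?_⟩
  rw [f.F_eq_one_iff_sign, hd, sign_eq_one_iff, pairScoreN_add_nsmul]
  rw [div_lt_iff₀ h] at hn
  linarith

end OfScoring

theorem F_add_eq (hC : f.Consistent) {P Q : Vote A → ℕ} {C1 C2 : Committee A k}
    (h : f.F Q C1 C2 = 0 ∨ f.F Q C1 C2 = f.F P C1 C2) : f.F (P + Q) C1 C2 = f.F P C1 C2 := by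
  have h12 := hC P Q C1 C2
  have h21 := hC P Q C2 C1
  have := f.antisymm P C2 C1
  have := f.antisymm Q C2 C1
  have := f.antisymm (P + Q) C2 C1
  have := f.mem_range P C1 C2
  have := f.mem_range Q C1 C2
  have := f.mem_range (P + Q) C1 C2
  omega

theorem isConsistentSign (hC : f.Consistent) (hCont : f.IsContinuous) (C1 C2 : Committee A k) :
    IsConsistentSign fun P => SignType.sign (f.F P C1 C2) where
  add_of_eq_zero P Q hQ := by
    rw [f.F_add_eq hC (.inl (sign_eq_zero_iff.1 hQ))]
  add_of_eq P Q h := by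
    rw [f.F_add_eq hC (.inr (f.F_eq_of_sign_eq h).symm)]
  exists_nsmul P Q hQ := by
    obtain ⟨n, hn⟩ := hCont P Q C1 C2 ((f.F_eq_one_iff_sign Q C1 C2).2 hQ)
    exact ⟨n, (f.F_eq_one_iff_sign _ C1 C2).1 hn⟩

theorem F_one_eq_zero (hN : f.Neutral) (C1 C2 : Committee A k) : f.F 1 C1 C2 = 0 := by
  obtain ⟨σ, h1, h2⟩ := Finset.exists_perm_image_swap (C1.2.trans C2.2.symm)
  have h := hN σ 1 C1 C2
  rw [show permComm σ C1 = C2 from Subtype.ext h1,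
    show permComm σ C2 = C1 from Subtype.ext h2] at h
  have := f.antisymm 1 C2 C1
  change f.F 1 C2 C1 = f.F 1 C1 C2 at h
  omega

theorem exists_antisymm_weights (hN : f.Neutral) (hC : f.Consistent) (hCont : f.IsContinuous) :
    ∃ lam : Finset A → Finset A → Vote A → ℝ, (∀ C1 C2, lam C2 C1 = -lam C1 C2) ∧
      ∀ (P : Vote A → ℕ) (C1 C2 : Committee A k),
        SignType.sign (f.F P C1 C2) = SignType.sign (∑ π, (P π : ℝ) * lam C1.1 C2.1 π) := by
  -- Indexed by all finsets, so that `averagedScoring` can evaluate the weights at `π⁻¹ I`.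
  have weights : ∀ C1 C2 : Finset A, ∃ μ : Vote A → ℝ,
      ∀ (h1 : C1.card = k) (h2 : C2.card = k) P,
        SignType.sign (f.F P ⟨C1, h1⟩ ⟨C2, h2⟩) = SignType.sign (∑ π, (P π : ℝ) * μ π) := by
    intro C1 C2
    by_cases h : C1.card = k ∧ C2.card = k
    · obtain ⟨μ, hμ⟩ := (f.isConsistentSign hC hCont ⟨C1, h.1⟩ ⟨C2, h.2⟩).exists_sign_eq_sum_mul
          (by simp [f.F_one_eq_zero hN])
      exact ⟨μ, fun _ _ => hμ⟩
    · exact ⟨0, fun h1 h2 => absurd ⟨h1, h2⟩ h⟩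
  choose μ hμ using weights
  refine ⟨fun C1 C2 => μ C1 C2 - μ C2 C1, fun C1 C2 => (neg_sub _ _).symm, fun P C1 C2 => ?_⟩
  have h21 := hμ C2.1 C1.1 C2.2 C1.2 P
  rw [f.antisymm, Left.sign_neg] at h21
  simp only [Pi.sub_apply, mul_sub, Finset.sum_sub_distrib]
  exact (sign_sub_eq_of_sign_eq_neg (hμ C1.1 C2.1 C1.2 C2.2 P).symm h21.symm).symm

theorem sign_eq_pairScoreN_averagedScoring (hN : f.Neutral)
    {lam : Finset A → Finset A → Vote A → ℝ}
    (hlam : ∀ (P : Vote A → ℕ) (C1 C2 : Committee A k),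
      SignType.sign (f.F P C1 C2) = SignType.sign (∑ π, (P π : ℝ) * lam C1.1 C2.1 π))
    (P : Vote A → ℕ) (D1 D2 : Committee A k) :
    SignType.sign (f.F P D1 D2) =
      SignType.sign (pairScoreN (averagedScoring lam) D1.1 D2.1 P) := by
  rw [pairScoreN_averagedScoring]
  refine (sign_sum Finset.univ_nonempty _ fun σ _ => ?_).symm
  rw [← hN σ.symm P D1 D2]
  exact (hlam _ (permComm σ.symm D1) (permComm σ.symm D2)).symm

end DecisionRule

theorem decisionScoringRule_characterization_general {A : Type*} [Fintype A] [DecidableEq A]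
    {k : ℕ} (f : DecisionRule A k ℕ) :
    f.IsDecisionScoringRule ↔ f.Neutral ∧ f.Consistent ∧ f.IsContinuous := by
  rw [f.isDecisionScoringRule_iff_exists_sign_eq]
  constructor
  · rintro ⟨d, -, hd⟩
    exact ⟨DecisionRule.neutral_of_sign_eq hd, DecisionRule.consistent_of_sign_eq hd,
      DecisionRule.isContinuous_of_sign_eq hd⟩
  · rintro ⟨hN, hC, hCont⟩
    obtain ⟨lam, hanti, hlam⟩ := f.exists_antisymm_weights hN hC hCont
    exact ⟨averagedScoring lam, fun I J _ _ => averagedScoring_antisymm lam hanti I J,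
      f.sign_eq_pairScoreN_averagedScoring hN hlam⟩

/-- **Axiomatic characterization of decision scoring rules.**
A `k`-decision rule is a decision scoring rule if and only if it is neutral, consistent,
and continuous. -/
theorem decisionScoringRule_characterization {A : Type*} [Fintype A] [DecidableEq A]
    {k : ℕ} (hk : k ≤ Fintype.card A) (f : DecisionRule A k ℕ) :
    f.IsDecisionScoringRule ↔ f.Neutral ∧ f.Consistent ∧ f.IsContinuous :=
  decisionScoringRule_characterization_general f
end

section
/- Let f be a neutral and consistent k-decision rule, let C1 and C2 be two size-k committees, let P be a voting situation, let v be a vote occurring in P, and let a, b be two candidates such that one of the following holds: (i) a, b ∉ C1 ∪ C2, (ii) a, b ∈ C1 ∩ C2, (iii) a, b ∈ C1 \ C2, or (iv) a, b ∈ C2 \ C1. Let P[v, a↔b] be the voting situation obtained from P by replacing one copy of the vote v with the vote obtained from v by swapping a and b. Then C1 ⪰_P C2 if and only if C1 ⪰_{P[v, a↔b]} C2. -/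
open Finset

/-! Under each of the four hypotheses the swap `σ = (a b)` fixes both committees, so by
neutrality it leaves the comparison of `C1` and `C2` unchanged. Hence, by consistency,
`C1 ⪰ C2` at `P` iff `C1 ⪰ C2` at the symmetrization `P + σP` (for the converse: a strict
`C2 ≻ C1` at `P` is also strict at `σP`, hence at `P + σP`). Moving one copy of `v` to `σv`
does not change the symmetrization, so the two situations compare `C1` and `C2` alike. -/

def moveOne {α : Type*} [DecidableEq α] (P : α → ℕ) (v w : α) : α → ℕ :=
  fun u => P u - (if u = v then 1 else 0) + (if u = w then 1 else 0)

lemma moveOne_add_moveOne_involutive {α : Type*} [DecidableEq α] {τ : α → α}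
    (hτ : Function.Involutive τ) {P : α → ℕ} {v : α} (hv : 1 ≤ P v) (u : α) :
    moveOne P v (τ v) u + moveOne P v (τ v) (τ u) = P u + P (τ u) := by
  have hu : (if u = v then 1 else 0) ≤ P u := by
    split_ifs with h
    · exact h ▸ hv
    · exact Nat.zero_le _
  have hτu : (if u = τ v then 1 else 0) ≤ P (τ u) := by
    split_ifs with h
    · rwa [h, hτ]
    · exact Nat.zero_le _
  simp only [moveOne, hτ.injective.eq_iff, hτ.eq_iff]
  omega

lemma Finset.image_swap_eq_self {A : Type*} [DecidableEq A] {a b : A} {C : Finset A}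
    (h : a ∈ C ↔ b ∈ C) : C.image (Equiv.swap a b) = C := by
  ext x
  rw [← Equiv.coe_toEmbedding, ← map_eq_image, mem_map_equiv, Equiv.symm_swap,
    Equiv.swap_apply_def]
  split_ifs <;> simp_all

section Voting

variable {A : Type*} [Fintype A]

lemma permVote_permVote (σ τ : Equiv.Perm A) (π : Vote A) :
    permVote σ (permVote τ π) = permVote (σ * τ) π := rfl

variable [DecidableEq A]

lemma permVote_swap_involutive (a b : A) : Function.Involutive (permVote (Equiv.swap a b)) :=
  fun π => by rw [permVote_permVote, Equiv.swap_mul_self]; rfl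

lemma permSitu_swap {R : Type*} (a b : A) (P : Vote A → R) :
    permSitu (Equiv.swap a b) P = P ∘ permVote (Equiv.swap a b) := by
  funext π
  simp only [permSitu, Function.comp_apply, permVote, Equiv.symm_swap]

end Voting

lemma permComm_swap_eq_self {A : Type*} [DecidableEq A] {k : ℕ} {a b : A} {C : Committee A k}
    (h : a ∈ C.1 ↔ b ∈ C.1) : permComm (Equiv.swap a b) C = C :=
  Subtype.ext (Finset.image_swap_eq_self h)

namespace DecisionRule

variable {A : Type*} [Fintype A] [DecidableEq A] {k : ℕ} {R : Type*} (f : DecisionRule A k R)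

lemma neg_iff_flip_eq_one {P : Vote A → R} {C1 C2 : Committee A k} :
    f.F P C1 C2 < 0 ↔ f.F P C2 C1 = 1 := by
  have := f.antisymm P C1 C2
  rcases f.mem_range P C1 C2 with h | h | h <;> omega

lemma F_permSitu_of_fixed (hneu : f.Neutral) {σ : Equiv.Perm A} {C1 C2 : Committee A k}
    (hC1 : permComm σ C1 = C1) (hC2 : permComm σ C2 = C2) (P : Vote A → R) :
    f.F (permSitu σ P) C1 C2 = f.F P C1 C2 := by
  simpa only [hC1, hC2] using hneu σ P C1 C2

lemma nonneg_iff_nonneg_add_permSitu [AddCommMonoid R] (hneu : f.Neutral)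
    (hcons : f.Consistent) {σ : Equiv.Perm A} {C1 C2 : Committee A k}
    (hC1 : permComm σ C1 = C1) (hC2 : permComm σ C2 = C2) (P : Vote A → R) :
    0 ≤ f.F P C1 C2 ↔ 0 ≤ f.F (P + permSitu σ P) C1 C2 := by
  constructor
  · intro hP
    exact (hcons P _ C1 C2).2 hP (f.F_permSitu_of_fixed hneu hC1 hC2 P ▸ hP)
  · rw [← not_lt, ← not_lt, not_imp_not, f.neg_iff_flip_eq_one, f.neg_iff_flip_eq_one]
    intro hP
    exact (hcons P _ C2 C1).1 hP
      (by rw [f.F_permSitu_of_fixed hneu hC2 hC1, hP]; exact zero_le_one)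

end DecisionRule

/-- **Irrelevance of swaps (Lemma 1).**
Let `f` be a neutral and consistent `k`-decision rule, `C1, C2` two size-`k` committees,
`P` a voting situation, `v` a vote occurring in `P`, and `a, b` two candidates that both lie
outside `C1 ∪ C2`, or both in `C1 ∩ C2`, or both in `C1 \ C2`, or both in `C2 \ C1`.
Then `C1 ⪰ C2` at `P` iff `C1 ⪰ C2` at the situation obtained from `P` by swapping
`a` and `b` in one copy of the vote `v`. -/
theorem swap_irrelevant {A : Type*} [Fintype A] [DecidableEq A] {k : ℕ}
    (f : DecisionRule A k ℕ) (hneu : f.Neutral) (hcons : f.Consistent)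
    (C1 C2 : Committee A k) (P : Vote A → ℕ) (v : Vote A) (hv : 1 ≤ P v) (a b : A)
    (hab : (a ∉ C1.1 ∪ C2.1 ∧ b ∉ C1.1 ∪ C2.1) ∨
           (a ∈ C1.1 ∩ C2.1 ∧ b ∈ C1.1 ∩ C2.1) ∨
           (a ∈ C1.1 \ C2.1 ∧ b ∈ C1.1 \ C2.1) ∨
           (a ∈ C2.1 \ C1.1 ∧ b ∈ C2.1 \ C1.1)) :
    0 ≤ f.F P C1 C2 ↔
      0 ≤ f.F (fun u => P u - (if u = v then 1 else 0)
                + (if u = permVote (Equiv.swap a b) v then 1 else 0)) C1 C2 := by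
  have hmem : (a ∈ C1.1 ↔ b ∈ C1.1) ∧ (a ∈ C2.1 ↔ b ∈ C2.1) := by
    simp only [mem_union, mem_inter, mem_sdiff] at hab
    tauto
  have hC1 := permComm_swap_eq_self hmem.1
  have hC2 := permComm_swap_eq_self hmem.2
  have hsymm : P + permSitu (Equiv.swap a b) P =
      moveOne P v (permVote (Equiv.swap a b) v) +
        permSitu (Equiv.swap a b) (moveOne P v (permVote (Equiv.swap a b) v)) := by
    funext π
    simp only [Pi.add_apply, permSitu_swap, Function.comp_apply]
    exact (moveOne_add_moveOne_involutive (permVote_swap_involutive a b) hv π).symm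
  change _ ↔ 0 ≤ f.F (moveOne P v (permVote (Equiv.swap a b) v)) C1 C2
  rw [f.nonneg_iff_nonneg_add_permSitu hneu hcons hC1 hC2,
    f.nonneg_iff_nonneg_add_permSitu hneu hcons hC1 hC2 (moveOne _ _ _), hsymm]
end

section
/- In the Δ-setup, for each two committee positions I1 and I2 with |I1 ∩ I2| = s, it holds that Δ_{I2,I1} = −Δ_{I1,I2}. -/
/-
Neutrality, applied to the permutation exchanging `C1` and `C2`, turns the vote
`v(C1→I1, C2→I2)` into `v(C1→I2, C2→I1)`. Symmetrizing a profile over the stabilizer of the pair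
`{C1, C2}` does not change the verdict and forgets everything about a vote except the positions
of `C1` and `C2`; together these identify the profiles defining `Δ_{I2,I1}` with those defining
`Δ_{I1,I2}`, with `C1` and `C2` exchanged. Both values then come from one cut: with
`P = v(C1→I2, C2→I1)` (won by `C2`) and `Q = v(C1→I1*, C2→I2*)` (won by `C1`), they are the
supremum of the ratios `y/x` at which `C2` wins at `x • P + y • Q` and the infimum of those at which
`C1` wins. Continuity makes both sets nonempty, consistency puts the first below the second, and
there is no gap: where `C2` does not win, one more copy of `Q` makes `C1` win.
-/

open Finset

/-- The voting situation consisting of a single copy of the vote `π`. -/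
def singleSitu {A : Type*} [Fintype A] [DecidableEq A] (π : Vote A) : Vote A → ℕ :=
  fun u => if u = π then 1 else 0

/-- The value `Δ_{I1,I2}` of the Δ-setup, relative to a rule `f`, committees `C1, C2`,
a family `w` of distinguished votes (where `w J1 J2` places `C1` on positions `J1` and
`C2` on positions `J2`), and the reference positions `I1s, I2s`. -/
noncomputable def Delta {A : Type*} [Fintype A] [DecidableEq A] {k : ℕ}
    (f : DecisionRule A k ℕ) (C1 C2 : Committee A k)
    (w : Finset (Fin (Fintype.card A)) → Finset (Fin (Fintype.card A)) → Vote A)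
    (I1s I2s : Finset (Fin (Fintype.card A)))
    (I1 I2 : Finset (Fin (Fintype.card A))) : ℝ :=
  if f.F (singleSitu (w I1 I2)) C1 C2 = 1 then
    sSup {q : ℝ | ∃ x y : ℕ, 0 < x ∧ 0 < y ∧ q = (y : ℝ) / (x : ℝ) ∧
      f.F (x • singleSitu (w I2 I1) + y • singleSitu (w I1s I2s)) C2 C1 = 1}
  else if f.F (singleSitu (w I1 I2)) C1 C2 = -1 then
    - sInf {q : ℝ | ∃ x y : ℕ, 0 < x ∧ 0 < y ∧ q = (y : ℝ) / (x : ℝ) ∧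
      f.F (x • singleSitu (w I2 I1) + y • singleSitu (w I2s I1s)) C2 C1 = 1}
  else 0

theorem Finset.image_equiv_symm_of_image_eq {α β : Type*} [DecidableEq α] [DecidableEq β]
    {s : Finset α} {t : Finset β} (e : α ≃ β) (h : s.image e = t) : t.image e.symm = s := by
  rw [← h, Finset.image_image, Equiv.symm_comp_self, Finset.image_id]

section Votes

variable {A : Type*} [Fintype A]

theorem permSitu_add {R : Type*} [Add R] (σ : Equiv.Perm A) (P Q : Vote A → R) :
    permSitu σ (P + Q) = permSitu σ P + permSitu σ Q := rfl

theorem permSitu_nsmul {R : Type*} [AddMonoid R] (σ : Equiv.Perm A) (n : ℕ) (P : Vote A → R) :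
    permSitu σ (n • P) = n • permSitu σ P := rfl

theorem permVote_trans_symm (a b : Vote A) : permVote (a.trans b.symm) a = b := by
  ext; simp [permVote]

def SwapsPositions (C1 C2 : Finset A) (a b : Vote A) : Prop :=
  b.pos C1 = a.pos C2 ∧ b.pos C2 = a.pos C1

theorem SwapsPositions.symm {C1 C2 : Finset A} {a b : Vote A} (h : SwapsPositions C1 C2 a b) :
    SwapsPositions C1 C2 b a :=
  ⟨h.2.symm, h.1.symm⟩

variable [DecidableEq A]

theorem SwapsPositions.image_trans_symm {C1 C2 : Finset A} {a b : Vote A}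
    (h : SwapsPositions C1 C2 a b) :
    C1.image (a.trans b.symm) = C2 ∧ C2.image (a.trans b.symm) = C1 := by
  simp only [Equiv.coe_trans, ← Finset.image_image]
  exact ⟨Finset.image_equiv_symm_of_image_eq b h.2, Finset.image_equiv_symm_of_image_eq b h.1⟩

theorem Vote.pos_permVote (σ : Equiv.Perm A) (u : Vote A) (C : Finset A) :
    (permVote σ u).pos C = u.pos (C.image σ.symm) := by
  simp only [Vote.pos, permVote, Equiv.coe_trans, Finset.image_image]

theorem permSitu_singleSitu (σ : Equiv.Perm A) (u : Vote A) :
    permSitu σ (singleSitu u) = singleSitu (permVote σ u) := by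
  funext π
  have : σ.trans π = u ↔ π = σ.symm.trans u := by
    constructor <;> rintro rfl <;> ext <;> simp
  exact if_congr this rfl rfl

def pairStabilizer (C1 C2 : Finset A) : Finset (Equiv.Perm A) :=
  univ.filter fun σ => C1.image σ = C1 ∧ C2.image σ = C2

theorem mem_pairStabilizer {C1 C2 : Finset A} {σ : Equiv.Perm A} :
    σ ∈ pairStabilizer C1 C2 ↔ C1.image σ = C1 ∧ C2.image σ = C2 := by
  simp [pairStabilizer]

theorem one_mem_pairStabilizer (C1 C2 : Finset A) : 1 ∈ pairStabilizer C1 C2 := by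
  simp [mem_pairStabilizer]

def symmetrize {R : Type*} [AddCommMonoid R] (C1 C2 : Finset A) (P : Vote A → R) :
    Vote A → R :=
  ∑ σ ∈ pairStabilizer C1 C2, permSitu σ P

theorem symmetrize_add {R : Type*} [AddCommMonoid R] (C1 C2 : Finset A) (P Q : Vote A → R) :
    symmetrize C1 C2 (P + Q) = symmetrize C1 C2 P + symmetrize C1 C2 Q := by
  simp only [symmetrize, permSitu_add, Finset.sum_add_distrib]

theorem symmetrize_nsmul {R : Type*} [AddCommMonoid R] (C1 C2 : Finset A) (n : ℕ)
    (P : Vote A → R) : symmetrize C1 C2 (n • P) = n • symmetrize C1 C2 P := by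
  simp only [symmetrize, permSitu_nsmul, Finset.smul_sum]

theorem symmetrize_singleSitu_apply (C1 C2 : Finset A) (u π : Vote A) :
    symmetrize C1 C2 (singleSitu u) π =
      if u.pos C1 = π.pos C1 ∧ u.pos C2 = π.pos C2 then 1 else 0 := by
  have hmem : ∀ C : Finset A, C.image (u.trans π.symm) = C ↔ u.pos C = π.pos C := by
    intro C
    rw [Vote.pos, Vote.pos, Equiv.coe_trans, ← Finset.image_image]
    exact ⟨fun h => by simpa using (Finset.image_equiv_symm_of_image_eq π.symm h).symm,
      fun h => by rw [h]; exact Finset.image_equiv_symm_of_image_eq π rfl⟩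
  have hterm : ∀ σ : Equiv.Perm A,
      singleSitu u (σ.trans π) = if σ = u.trans π.symm then 1 else 0 := by
    intro σ
    have : σ.trans π = u ↔ σ = u.trans π.symm := by
      constructor <;> rintro rfl <;> ext <;> simp
    exact if_congr this rfl rfl
  simp only [symmetrize, Finset.sum_apply, permSitu, hterm, Finset.sum_ite_eq',
    mem_pairStabilizer, hmem]

theorem symmetrize_singleSitu_congr {C1 C2 : Finset A} {u u' : Vote A}
    (h1 : u.pos C1 = u'.pos C1) (h2 : u.pos C2 = u'.pos C2) :
    symmetrize C1 C2 (singleSitu u) = symmetrize C1 C2 (singleSitu u') :=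
  funext fun π => by simp only [symmetrize_singleSitu_apply, h1, h2]

end Votes

namespace DecisionRule

section Consistency

variable {A : Type*} [Fintype A] [DecidableEq A] {k : ℕ} {R : Type*}
  {f : DecisionRule A k R} {P Q : Vote A → R} {C1 C2 : Committee A k}

theorem F_eq_neg_one_iff : f.F P C1 C2 = -1 ↔ f.F P C2 C1 = 1 := by
  rw [f.antisymm]; omega

theorem F_nonneg_of_ne_one (h : f.F P C2 C1 ≠ 1) : 0 ≤ f.F P C1 C2 := by
  have := f.mem_range P C1 C2
  rw [F_eq_neg_one_iff] at this
  omega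

variable [AddCommMonoid R]

theorem Consistent.F_sum_eq_one (hcons : f.Consistent) {ι : Type*} {s : Finset ι}
    (hs : s.Nonempty) {P : ι → Vote A → R} (h : ∀ i ∈ s, f.F (P i) C1 C2 = 1) :
    f.F (∑ i ∈ s, P i) C1 C2 = 1 :=
  Finset.sum_induction_nonempty P (f.F · C1 C2 = 1)
    (fun _ _ ha hb => (hcons _ _ C1 C2).1 ha (by rw [hb]; norm_num)) hs h

theorem Consistent.F_sum_nonneg (hcons : f.Consistent) {ι : Type*} {s : Finset ι}
    (hs : s.Nonempty) {P : ι → Vote A → R} (h : ∀ i ∈ s, 0 ≤ f.F (P i) C1 C2) :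
    0 ≤ f.F (∑ i ∈ s, P i) C1 C2 :=
  Finset.sum_induction_nonempty P (0 ≤ f.F · C1 C2) (fun _ _ => (hcons _ _ C1 C2).2) hs h

theorem Consistent.F_sum_of_forall_eq (hcons : f.Consistent) {ι : Type*} {s : Finset ι}
    (hs : s.Nonempty) {P : ι → Vote A → R} {c : ℤ} (h : ∀ i ∈ s, f.F (P i) C1 C2 = c) :
    f.F (∑ i ∈ s, P i) C1 C2 = c := by
  obtain ⟨i, hi⟩ := hs
  rcases f.mem_range (P i) C1 C2 with hc | hc | hc <;> rw [h i hi] at hc <;> subst hc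
  · simp_rw [F_eq_neg_one_iff] at h ⊢
    exact hcons.F_sum_eq_one ⟨i, hi⟩ h
  · have h12 := hcons.F_sum_nonneg ⟨i, hi⟩ fun j hj => (h j hj).ge
    have h21 := hcons.F_sum_nonneg (C1 := C2) (C2 := C1) ⟨i, hi⟩ fun j hj => by
      rw [f.antisymm, h j hj]; rfl
    rw [f.antisymm] at h21
    omega
  · exact hcons.F_sum_eq_one ⟨i, hi⟩ h

theorem Consistent.F_nsmul_eq_one (hcons : f.Consistent) {n : ℕ} (hn : n ≠ 0)
    (h : f.F P C1 C2 = 1) : f.F (n • P) C1 C2 = 1 := by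
  simpa using hcons.F_sum_eq_one (s := range n) (P := fun _ => P) (by simpa) fun _ _ => h

theorem Consistent.F_add_eq_one (hcons : f.Consistent) (hQ : f.F Q C1 C2 = 1)
    (hP : f.F P C2 C1 ≠ 1) : f.F (P + Q) C1 C2 = 1 := by
  rw [add_comm]
  exact (hcons _ _ C1 C2).1 hQ (F_nonneg_of_ne_one hP)

end Consistency

section Neutrality

variable {A : Type*} [Fintype A] [DecidableEq A] {k : ℕ} {R : Type*}
  {f : DecisionRule A k R} {C1 C2 : Committee A k}

theorem Neutral.F_permSitu_of_mem_pairStabilizer (hneu : f.Neutral) {σ : Equiv.Perm A}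
    (hσ : σ ∈ pairStabilizer C1.1 C2.1) (P : Vote A → R) :
    f.F (permSitu σ P) C1 C2 = f.F P C1 C2 := by
  rw [mem_pairStabilizer] at hσ
  have := hneu σ P C1 C2
  rwa [show permComm σ C1 = C1 from Subtype.ext hσ.1,
    show permComm σ C2 = C2 from Subtype.ext hσ.2] at this

theorem Neutral.F_permSitu_swap (hneu : f.Neutral) {a b : Vote A}
    (h : SwapsPositions C1.1 C2.1 a b) (P : Vote A → R) :
    f.F (permSitu (a.trans b.symm) P) C1 C2 = f.F P C2 C1 := by
  have := hneu (a.trans b.symm) P C2 C1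
  rwa [show permComm (a.trans b.symm) C2 = C1 from Subtype.ext h.image_trans_symm.2,
    show permComm (a.trans b.symm) C1 = C2 from Subtype.ext h.image_trans_symm.1] at this

theorem Neutral.F_symmetrize [AddCommMonoid R] (hneu : f.Neutral) (hcons : f.Consistent)
    (P : Vote A → R) : f.F (symmetrize C1.1 C2.1 P) C1 C2 = f.F P C1 C2 :=
  hcons.F_sum_of_forall_eq ⟨1, one_mem_pairStabilizer _ _⟩ fun _ hσ =>
    hneu.F_permSitu_of_mem_pairStabilizer hσ P

end Neutrality

section TwoVotes

variable {A : Type*} [Fintype A] [DecidableEq A] {k : ℕ}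
  {f : DecisionRule A k ℕ} {C1 C2 : Committee A k} {a a' b b' : Vote A}

theorem Neutral.F_singleSitu_swap (hneu : f.Neutral) (h : SwapsPositions C1.1 C2.1 a a') :
    f.F (singleSitu a') C1 C2 = f.F (singleSitu a) C2 C1 := by
  rw [← hneu.F_permSitu_swap h, permSitu_singleSitu, permVote_trans_symm]

theorem Neutral.F_two_votes_congr (hneu : f.Neutral) (hcons : f.Consistent)
    (ha1 : a.pos C1.1 = a'.pos C1.1) (ha2 : a.pos C2.1 = a'.pos C2.1)
    (hb1 : b.pos C1.1 = b'.pos C1.1) (hb2 : b.pos C2.1 = b'.pos C2.1) (x y : ℕ) :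
    f.F (x • singleSitu a + y • singleSitu b) C1 C2 =
      f.F (x • singleSitu a' + y • singleSitu b') C1 C2 := by
  rw [← hneu.F_symmetrize hcons, ← hneu.F_symmetrize hcons (x • _ + _), symmetrize_add,
    symmetrize_add, symmetrize_nsmul, symmetrize_nsmul, symmetrize_nsmul, symmetrize_nsmul,
    symmetrize_singleSitu_congr ha1 ha2, symmetrize_singleSitu_congr hb1 hb2]

theorem Neutral.F_two_votes_swap (hneu : f.Neutral) (hcons : f.Consistent)
    (ha : SwapsPositions C1.1 C2.1 a a') (hb : SwapsPositions C1.1 C2.1 b b') (x y : ℕ) :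
    f.F (x • singleSitu a' + y • singleSitu b') C1 C2 =
      f.F (x • singleSitu a + y • singleSitu b) C2 C1 := by
  have hσ := ha.image_trans_symm
  have hb1 : (permVote (a.trans a'.symm) b).pos C1.1 = b'.pos C1.1 := by
    rw [Vote.pos_permVote, Finset.image_equiv_symm_of_image_eq _ hσ.2, hb.1]
  have hb2 : (permVote (a.trans a'.symm) b).pos C2.1 = b'.pos C2.1 := by
    rw [Vote.pos_permVote, Finset.image_equiv_symm_of_image_eq _ hσ.1, hb.2]
  rw [← hneu.F_permSitu_swap ha, permSitu_add, permSitu_nsmul, permSitu_nsmul,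
    permSitu_singleSitu, permSitu_singleSitu, permVote_trans_symm]
  exact (hneu.F_two_votes_congr hcons rfl rfl hb1 hb2 x y).symm

end TwoVotes

section Ratios

variable {A : Type*} [Fintype A] [DecidableEq A] {k : ℕ} {R : Type*} [AddCommMonoid R]
  {f : DecisionRule A k R} {P Q : Vote A → R} {C1 C2 : Committee A k}

def ratios (f : DecisionRule A k R) (P Q : Vote A → R) (C1 C2 : Committee A k) : Set ℝ :=
  {q | ∃ x y : ℕ, 0 < x ∧ 0 < y ∧ q = (y : ℝ) / (x : ℝ) ∧ f.F (x • P + y • Q) C1 C2 = 1}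

theorem ratios_nonempty_of_left (hcont : f.IsContinuous) (hP : f.F P C1 C2 = 1)
    (hQ : f.F Q C1 C2 ≠ 1) : (f.ratios P Q C1 C2).Nonempty := by
  obtain ⟨n, hn⟩ := hcont Q P C1 C2 hP
  have hn0 : n ≠ 0 := by rintro rfl; simp_all
  exact ⟨_, n, 1, Nat.pos_of_ne_zero hn0, one_pos, rfl, by rwa [one_smul, add_comm]⟩

theorem ratios_nonempty_of_right (hcont : f.IsContinuous) (hP : f.F P C1 C2 ≠ 1)
    (hQ : f.F Q C1 C2 = 1) : (f.ratios P Q C1 C2).Nonempty := by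
  obtain ⟨m, hm⟩ := hcont P Q C1 C2 hQ
  have hm0 : m ≠ 0 := by rintro rfl; simp_all
  exact ⟨_, 1, m, one_pos, Nat.pos_of_ne_zero hm0, rfl, by rwa [one_smul]⟩

theorem nonneg_of_mem_ratios {q : ℝ} (hq : q ∈ f.ratios P Q C1 C2) : 0 ≤ q := by
  obtain ⟨x, y, -, -, rfl, -⟩ := hq
  positivity

/-- If `y/x > y'/x'`, scaling the two profiles to the common `P`-weight `x * x'` and topping up
the second with copies of `Q` makes `C1` win where `C2` wins. -/
theorem le_of_mem_ratios (hcons : f.Consistent) (hQ : f.F Q C1 C2 = 1) {a b : ℝ}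
    (ha : a ∈ f.ratios P Q C2 C1) (hb : b ∈ f.ratios P Q C1 C2) : a ≤ b := by
  obtain ⟨x, y, hx, hy, rfl, hxy⟩ := ha
  obtain ⟨x', y', hx', hy', rfl, hxy'⟩ := hb
  rw [div_le_div_iff₀ (by positivity) (by positivity)]
  by_contra! hlt
  have hlt : x * y' < x' * y := by rw [mul_comm x, mul_comm x']; exact_mod_cast hlt
  have h21 : f.F ((x' * x) • P + (x' * y) • Q) C2 C1 = 1 := by
    simpa only [smul_add, mul_smul] using hcons.F_nsmul_eq_one hx'.ne' hxy
  have h12 : f.F ((x * x') • P + (x * y') • Q + (x' * y - x * y') • Q) C1 C2 = 1 :=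
    (hcons _ _ C1 C2).1 (by simpa only [smul_add, mul_smul] using hcons.F_nsmul_eq_one hx.ne' hxy')
      (by rw [hcons.F_nsmul_eq_one (by omega) hQ]; norm_num)
  rw [add_assoc, ← add_smul, Nat.add_sub_cancel' hlt.le, mul_comm x x'] at h12
  rw [← F_eq_neg_one_iff, h12] at h21
  norm_num at h21

theorem succ_div_mem_ratios (hcons : f.Consistent) (hQ : f.F Q C1 C2 = 1) {x y : ℕ}
    (hx : 0 < x) (h : f.F (x • P + y • Q) C2 C1 ≠ 1) :
    ((y + 1 : ℕ) : ℝ) / x ∈ f.ratios P Q C1 C2 :=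
  ⟨x, y + 1, hx, y.succ_pos, rfl, by
    rw [succ_nsmul, ← add_assoc]; exact hcons.F_add_eq_one hQ h⟩

theorem sInf_ratios_le_sSup_ratios (hcons : f.Consistent) (hQ : f.F Q C1 C2 = 1)
    (hS : (f.ratios P Q C2 C1).Nonempty) (hSbdd : BddAbove (f.ratios P Q C2 C1))
    (hTbdd : BddBelow (f.ratios P Q C1 C2)) :
    sInf (f.ratios P Q C1 C2) ≤ sSup (f.ratios P Q C2 C1) := by
  set S := f.ratios P Q C2 C1
  have hS0 : 0 ≤ sSup S := (nonneg_of_mem_ratios hS.some_mem).trans (le_csSup hSbdd hS.some_mem)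
  refine le_of_forall_pos_lt_add fun ε hε => ?_
  obtain ⟨x, hx⟩ := exists_nat_gt (2 / ε)
  have hx0 : (0 : ℝ) < x := (by positivity : (0 : ℝ) < 2 / ε).trans hx
  obtain ⟨y, hy⟩ : ∃ y : ℕ, y = ⌊x * sSup S⌋₊ + 1 := ⟨_, rfl⟩
  have hyS : f.F (x • P + y • Q) C2 C1 ≠ 1 := by
    intro h
    have hle := le_csSup hSbdd ⟨x, y, by exact_mod_cast hx0, by omega, rfl, h⟩
    rw [div_le_iff₀ hx0] at hle
    have := Nat.lt_floor_add_one (x * sSup S)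
    rw [hy] at hle
    push_cast at hle
    linarith
  calc sInf (f.ratios P Q C1 C2) ≤ ((y + 1 : ℕ) : ℝ) / x :=
        csInf_le hTbdd (succ_div_mem_ratios hcons hQ (by exact_mod_cast hx0) hyS)
    _ ≤ sSup S + 2 / x := by
      rw [div_le_iff₀ hx0, add_mul, div_mul_cancel₀ _ hx0.ne']
      have := Nat.floor_le (mul_nonneg hx0.le hS0)
      rw [hy]
      push_cast
      linarith
    _ < sSup S + ε := by
      rw [div_lt_iff₀ hε] at hx
      rw [add_lt_add_iff_left, div_lt_iff₀ hx0]
      linarith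

theorem sSup_ratios_eq_sInf_ratios (hcons : f.Consistent) (hcont : f.IsContinuous)
    (hP : f.F P C2 C1 = 1) (hQ : f.F Q C1 C2 = 1) :
    sSup (f.ratios P Q C2 C1) = sInf (f.ratios P Q C1 C2) := by
  have hS : (f.ratios P Q C2 C1).Nonempty :=
    ratios_nonempty_of_left hcont hP (by rw [F_eq_neg_one_iff.2 hQ]; decide)
  have hT : (f.ratios P Q C1 C2).Nonempty :=
    ratios_nonempty_of_right hcont (by rw [F_eq_neg_one_iff.2 hP]; decide) hQ
  have hST : ∀ a ∈ f.ratios P Q C2 C1, ∀ b ∈ f.ratios P Q C1 C2, a ≤ b :=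
    fun a ha b hb => le_of_mem_ratios hcons hQ ha hb
  refine le_antisymm (csSup_le hS fun a ha => le_csInf hT (hST a ha)) ?_
  exact sInf_ratios_le_sSup_ratios hcons hQ hS ⟨hT.some, fun a ha => hST a ha _ hT.some_mem⟩
    ⟨hS.some, fun b hb => hST _ hS.some_mem b hb⟩

end Ratios

end DecisionRule

section Delta

open DecisionRule

variable {A : Type*} [Fintype A] [DecidableEq A] {k : ℕ} {f : DecisionRule A k ℕ}
  {C1 C2 : Committee A k}
  {w : Finset (Fin (Fintype.card A)) → Finset (Fin (Fintype.card A)) → Vote A}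
  {I1s I2s I1 I2 : Finset (Fin (Fintype.card A))}

theorem Delta_of_F_eq_one (h : f.F (singleSitu (w I1 I2)) C1 C2 = 1) :
    Delta f C1 C2 w I1s I2s I1 I2 =
      sSup (f.ratios (singleSitu (w I2 I1)) (singleSitu (w I1s I2s)) C2 C1) := by
  rw [Delta, if_pos h]
  rfl

theorem Delta_of_F_eq_neg_one (h : f.F (singleSitu (w I1 I2)) C1 C2 = -1) :
    Delta f C1 C2 w I1s I2s I1 I2 =
      -sInf (f.ratios (singleSitu (w I2 I1)) (singleSitu (w I2s I1s)) C2 C1) := by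
  rw [Delta, if_neg (by rw [h]; decide), if_pos h]
  rfl

theorem Delta_of_F_eq_zero (h : f.F (singleSitu (w I1 I2)) C1 C2 = 0) :
    Delta f C1 C2 w I1s I2s I1 I2 = 0 := by
  rw [Delta, if_neg (by rw [h]; decide), if_neg (by rw [h]; decide)]

theorem Delta_swap_of_F_eq_one (hneu : f.Neutral) (hcons : f.Consistent)
    (hcont : f.IsContinuous) (hu : SwapsPositions C1.1 C2.1 (w I1 I2) (w I2 I1))
    (hv : SwapsPositions C1.1 C2.1 (w I1s I2s) (w I2s I1s))
    (hstar : f.F (singleSitu (w I1s I2s)) C1 C2 = 1)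
    (hpos : f.F (singleSitu (w I1 I2)) C1 C2 = 1) :
    Delta f C1 C2 w I1s I2s I2 I1 = -Delta f C1 C2 w I1s I2s I1 I2 := by
  have hu' : f.F (singleSitu (w I2 I1)) C2 C1 = 1 :=
    (hneu.F_singleSitu_swap hu.symm).symm.trans hpos
  have hreflect : f.ratios (singleSitu (w I1 I2)) (singleSitu (w I2s I1s)) C2 C1 =
      f.ratios (singleSitu (w I2 I1)) (singleSitu (w I1s I2s)) C1 C2 := by
    ext q
    simp only [ratios, hneu.F_two_votes_swap hcons hu hv.symm]
  rw [Delta_of_F_eq_one hpos, Delta_of_F_eq_neg_one (F_eq_neg_one_iff.2 hu'), hreflect,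
    sSup_ratios_eq_sInf_ratios hcons hcont hu' hstar]

end Delta

theorem delta_reverse_general {A : Type*} [Fintype A] [DecidableEq A] {k s : ℕ}
    (f : DecisionRule A k ℕ) (hneu : f.Neutral) (hcons : f.Consistent) (hcont : f.IsContinuous)
    (C1 C2 : Committee A k)
    (w : Finset (Fin (Fintype.card A)) → Finset (Fin (Fintype.card A)) → Vote A)
    (hw : ∀ J1 J2 : Finset (Fin (Fintype.card A)), J1.card = k → J2.card = k →
      (J1 ∩ J2).card = s → (w J1 J2).pos C1.1 = J1 ∧ (w J1 J2).pos C2.1 = J2)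
    (I1s I2s : Finset (Fin (Fintype.card A)))
    (hI1s : I1s.card = k) (hI2s : I2s.card = k) (hIs : (I1s ∩ I2s).card = s)
    (hstar : f.F (singleSitu (w I1s I2s)) C1 C2 = 1)
    (I1 I2 : Finset (Fin (Fintype.card A)))
    (hI1 : I1.card = k) (hI2 : I2.card = k) (hI : (I1 ∩ I2).card = s) :
    Delta f C1 C2 w I1s I2s I2 I1 = - Delta f C1 C2 w I1s I2s I1 I2 := by
  have hswap : ∀ J1 J2, J1.card = k → J2.card = k → (J1 ∩ J2).card = s →
      SwapsPositions C1.1 C2.1 (w J1 J2) (w J2 J1) := by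
    intro J1 J2 hJ1 hJ2 hJ
    obtain ⟨h1, h2⟩ := hw J1 J2 hJ1 hJ2 hJ
    obtain ⟨h1', h2'⟩ := hw J2 J1 hJ2 hJ1 (by rwa [inter_comm])
    exact ⟨h1'.trans h2.symm, h2'.trans h1.symm⟩
  have hu := hswap I1 I2 hI1 hI2 hI
  have hv := hswap I1s I2s hI1s hI2s hIs
  rcases f.mem_range (singleSitu (w I1 I2)) C1 C2 with h | h | h
  · have hpos : f.F (singleSitu (w I2 I1)) C1 C2 = 1 :=
      (hneu.F_singleSitu_swap hu).trans (DecisionRule.F_eq_neg_one_iff.1 h)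
    rw [Delta_swap_of_F_eq_one hneu hcons hcont hu.symm hv hstar hpos, neg_neg]
  · have h' : f.F (singleSitu (w I2 I1)) C1 C2 = 0 := by
      rw [hneu.F_singleSitu_swap hu, f.antisymm, h, neg_zero]
    rw [Delta_of_F_eq_zero h, Delta_of_F_eq_zero h', neg_zero]
  · exact Delta_swap_of_F_eq_one hneu hcons hcont hu hv hstar h

/-- **Lemma 2.** In the Δ-setup, `Δ_{I2,I1} = -Δ_{I1,I2}` for all committee positions
`I1, I2` whose intersection has `s` elements. -/
theorem delta_reverse {A : Type*} [Fintype A] [DecidableEq A] {k s : ℕ}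
    (hk : k ≤ Fintype.card A) (hs : s < k)
    (f : DecisionRule A k ℕ) (hneu : f.Neutral) (hcons : f.Consistent) (hcont : f.IsContinuous)
    (C1 C2 : Committee A k) (hC : (C1.1 ∩ C2.1).card = s)
    (w : Finset (Fin (Fintype.card A)) → Finset (Fin (Fintype.card A)) → Vote A)
    (hw : ∀ J1 J2 : Finset (Fin (Fintype.card A)), J1.card = k → J2.card = k →
      (J1 ∩ J2).card = s → (w J1 J2).pos C1.1 = J1 ∧ (w J1 J2).pos C2.1 = J2)
    (I1s I2s : Finset (Fin (Fintype.card A)))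
    (hI1s : I1s.card = k) (hI2s : I2s.card = k) (hIs : (I1s ∩ I2s).card = s)
    (hstar : f.F (singleSitu (w I1s I2s)) C1 C2 = 1)
    (I1 I2 : Finset (Fin (Fintype.card A)))
    (hI1 : I1.card = k) (hI2 : I2.card = k) (hI : (I1 ∩ I2).card = s) :
    Delta f C1 C2 w I1s I2s I2 I1 = - Delta f C1 C2 w I1s I2s I1 I2 :=
  delta_reverse_general f hneu hcons hcont C1 C2 w hw I1s I2s hI1s hI2s hIs hstar I1 I2 hI1 hI2 hI
end

section
/- Let p and j be integers with 1 ≤ j ≤ p. The Johnson graph G(j,p), whose vertices are the j-element subsets of {1,…,p} and in which two vertices are adjacent exactly when the corresponding subsets have j−1 elements in common, contains a Hamiltonian path (a path visiting each vertex exactly once) that starts at the set {1,…,j} and ends at the set {p−j+1,…,p}. -/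
/-- The Johnson graph `G(j,p)`: vertices are the `j`-element subsets of `{1,…,p}`
(modelled as `Fin p`, with `i : Fin p` standing for the number `i+1`), and two
distinct subsets are adjacent exactly when their intersection has `j-1` elements. -/
def johnsonGraph (p j : ℕ) : SimpleGraph {S : Finset (Fin p) // S.card = j} where
  Adj S T := S ≠ T ∧ (S.1 ∩ T.1).card = j - 1
  symm := by
    constructor
    intro S T h
    exact ⟨h.1.symm, by rw [Finset.inter_comm]; exact h.2⟩
  loopless := by
    constructor
    intro S h
    exact h.1 rfl


/-!
The `j`-subsets of `{0,…,m}` are those avoiding `m`, i.e. the `j`-subsets of `{0,…,m-1}`, and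
`insert m` of the `(j-1)`-subsets of `{0,…,m-1}`. A Hamiltonian path through the first family
followed by `insert m` of one through the second is a Hamiltonian path when the junction is an
edge. To end at `{m-j+1,…,m}`, the second path must run from `{m-j,…,m-2}` to `{m-j+1,…,m-1}`.
Such a shifted path on the `k`-subsets of `{0,…,n}` comes from the same decomposition: the
reverse of an initial-to-final path on the `k`-subsets of `{0,…,n-1}`, then `insert n` of an
initial-to-final path on its `(k-1)`-subsets. Induction on `k` produces both kinds of paths.
-/

open Finset

theorem SimpleGraph.Walk.exists_isHamiltonian_of_isChain {V : Type*} [DecidableEq V]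
    {G : SimpleGraph V} {l : List V} {a b : V} (hc : l.IsChain G.Adj) (hnd : l.Nodup)
    (hmem : ∀ v, v ∈ l) (ha : l.head? = some a) (hb : l.getLast? = some b) :
    ∃ w : G.Walk a b, w.IsHamiltonian := by
  have hne : l ≠ [] := List.ne_nil_of_mem (List.mem_of_mem_head? ha)
  obtain rfl := (List.head_eq_iff_head?_eq_some hne).2 ha
  obtain rfl := (List.getLast_eq_iff_getLast?_eq_some hne).2 hb
  refine ⟨ofSupport l hne hc, IsPath.isHamiltonian_of_mem ?_ ?_⟩
  · exact IsPath.mk' (by rwa [support_ofSupport])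
  · simpa using hmem

-- Hamiltonian paths of `G(k,n)` as vertex lists of subsets of `ℕ`, so that paths over different
-- ground sets can be concatenated and lifted by `insert`.
structure IsGrayCode (n k : ℕ) (a b : Finset ℕ) (l : List (Finset ℕ)) : Prop where
  mem_iff : ∀ S, S ∈ l ↔ S ∈ (range n).powersetCard k
  nodup : l.Nodup
  isChain : l.IsChain fun S T ↦ #(S ∩ T) + 1 = k
  head?_eq : l.head? = some a
  getLast?_eq : l.getLast? = some b

namespace IsGrayCode

variable {m n k : ℕ} {a b c d S : Finset ℕ} {l l₁ l₂ : List (Finset ℕ)}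

lemma singleton_empty (n : ℕ) : IsGrayCode n 0 ∅ ∅ [∅] where
  mem_iff S := by simp
  nodup := List.nodup_singleton _
  isChain := List.isChain_singleton _
  head?_eq := rfl
  getLast?_eq := rfl

lemma singleton_range (n : ℕ) : IsGrayCode n n (range n) (range n) [range n] where
  mem_iff S := by
    rw [List.mem_singleton, ← mem_singleton, ← powersetCard_self, card_range]
  nodup := List.nodup_singleton _
  isChain := List.isChain_singleton _
  head?_eq := rfl
  getLast?_eq := rfl

lemma reverse (h : IsGrayCode n k a b l) : IsGrayCode n k b a l.reverse where
  mem_iff S := List.mem_reverse.trans (h.mem_iff S)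
  nodup := List.nodup_reverse.2 h.nodup
  isChain := List.isChain_reverse.2 <| h.isChain.imp fun S T hST ↦ by rwa [inter_comm]
  head?_eq := by rw [List.head?_reverse, h.getLast?_eq]
  getLast?_eq := by rw [List.getLast?_reverse, h.head?_eq]

lemma left_mem (h : IsGrayCode n k a b l) : a ∈ l :=
  List.mem_of_mem_head? h.head?_eq

lemma right_mem (h : IsGrayCode n k a b l) : b ∈ l :=
  List.mem_of_mem_getLast? h.getLast?_eq

lemma card_eq (h : IsGrayCode n k a b l) (hS : S ∈ l) : #S = k :=
  (mem_powersetCard.1 ((h.mem_iff S).1 hS)).2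

lemma notMem_of_mem (h : IsGrayCode n k a b l) (hS : S ∈ l) : n ∉ S := fun hn ↦
  notMem_range_self ((mem_powersetCard.1 ((h.mem_iff S).1 hS)).1 hn)

-- For a `(k+1)`-set `b` and a `k`-set `c` avoiding `m`, `b` and `insert m c` are adjacent
-- iff `c ⊆ b`.
lemma append_map_insert (h₁ : IsGrayCode m (k + 1) a b l₁) (h₂ : IsGrayCode m k c d l₂)
    (hcb : c ⊆ b) :
    IsGrayCode (m + 1) (k + 1) a (insert m d) (l₁ ++ l₂.map (insert m)) where
  mem_iff S := by
    rw [range_add_one, powersetCard_succ_insert notMem_range_self, mem_union, mem_image,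
      List.mem_append, List.mem_map, h₁.mem_iff]
    simp only [h₂.mem_iff]
  nodup := by
    refine h₁.nodup.append (h₂.nodup.map_on fun S hS T hT hST ↦ ?_) fun S hS₁ hS₂ ↦ ?_
    · rw [← erase_insert (h₂.notMem_of_mem hS), hST, erase_insert (h₂.notMem_of_mem hT)]
    · obtain ⟨T, -, rfl⟩ := List.mem_map.1 hS₂
      exact h₁.notMem_of_mem hS₁ (mem_insert_self m T)
  isChain := by
    refine List.isChain_append.2 ⟨h₁.isChain, ?_, ?_⟩
    · refine (List.isChain_map _).2 <| (List.IsChain.iff_mem.1 h₂.isChain).imp ?_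
      rintro S T ⟨hS, -, hST⟩
      have hm : m ∉ S ∩ T := fun hm ↦ h₂.notMem_of_mem hS (mem_inter.1 hm).1
      rw [← insert_inter_distrib, card_insert_of_notMem hm, hST]
    · rintro b' hb' c' hc'
      rw [h₁.getLast?_eq, Option.mem_some_iff] at hb'
      rw [List.head?_map, h₂.head?_eq, Option.map_some, Option.mem_some_iff] at hc'
      subst hb' hc'
      rw [inter_insert_of_notMem (h₁.notMem_of_mem h₁.right_mem), inter_eq_right.2 hcb,
        h₂.card_eq h₂.left_mem]
  head?_eq := by rw [List.head?_append, h₁.head?_eq]; rfl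
  getLast?_eq := by rw [List.getLast?_append, List.getLast?_map, h₂.getLast?_eq]; rfl

end IsGrayCode

theorem exists_isGrayCode (k i : ℕ) :
    (∃ l, IsGrayCode (i + k) k (range k) (Ico i (i + k)) l) ∧
      ∃ l, IsGrayCode (i + k + 1) k (Ico i (i + k)) (Ico (i + 1) (i + k + 1)) l := by
  induction k generalizing i with
  | zero => exact ⟨⟨[∅], by simpa using IsGrayCode.singleton_empty i⟩,
      ⟨[∅], by simpa using IsGrayCode.singleton_empty (i + 1)⟩⟩
  | succ k ih =>
    have initial_final : ∀ i, ∃ l, IsGrayCode (i + (k + 1)) (k + 1) (range (k + 1))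
        (Ico i (i + (k + 1))) l := by
      intro i
      induction i with
      | zero => exact ⟨[range (k + 1)], by simpa using IsGrayCode.singleton_range (k + 1)⟩
      | succ i ihi =>
        obtain ⟨l₁, h₁⟩ := ihi
        obtain ⟨l₂, h₂⟩ := (ih i).2
        rw [show i + 1 + (k + 1) = i + (k + 1) + 1 by omega,
          ← insert_Ico_right_eq_Ico_add_one (by omega)]
        exact ⟨_, h₁.append_map_insert h₂ (Ico_subset_Ico_right (by omega))⟩
    refine ⟨initial_final i, ?_⟩
    obtain ⟨l₁, h₁⟩ := initial_final i
    obtain ⟨l₂, h₂⟩ := (ih (i + 1)).1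
    rw [show i + 1 + k = i + (k + 1) by omega] at h₂
    rw [← insert_Ico_right_eq_Ico_add_one (by omega)]
    exact ⟨_, h₁.reverse.append_map_insert h₂ (range_mono (by omega))⟩

lemma johnsonGraph_adj_of_card_inter_add_one {p j : ℕ} {S T : {S : Finset (Fin p) // #S = j}}
    (h : #(S.1 ∩ T.1) + 1 = j) : (johnsonGraph p j).Adj S T := by
  refine ⟨fun hST ↦ ?_, by omega⟩
  rw [hST, inter_self, T.2] at h
  omega

lemma exists_map_valEmbedding_eq_iff {p j : ℕ} {S : Finset ℕ} :
    (∃ T : {T : Finset (Fin p) // #T = j}, T.1.map Fin.valEmbedding = S) ↔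
      S ∈ (range p).powersetCard j := by
  rw [mem_powersetCard, ← Nat.Iio_eq_range, ← Fin.map_valEmbedding_univ, subset_map_iff]
  constructor
  · rintro ⟨T, rfl⟩
    exact ⟨⟨T.1, subset_univ _, rfl⟩, by rw [card_map, T.2]⟩
  · rintro ⟨⟨T, -, rfl⟩, hT⟩
    exact ⟨⟨T, by rwa [card_map] at hT⟩, rfl⟩

theorem IsGrayCode.exists_walk_johnsonGraph {p j : ℕ} {a b : Finset ℕ} {l : List (Finset ℕ)}
    (h : IsGrayCode p j a b l) :
    ∃ (u v : {S : Finset (Fin p) // #S = j}) (w : (johnsonGraph p j).Walk u v),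
      u.1.map Fin.valEmbedding = a ∧ v.1.map Fin.valEmbedding = b ∧ w.IsHamiltonian := by
  set e : {S : Finset (Fin p) // #S = j} → Finset ℕ := fun T ↦ T.1.map Fin.valEmbedding
  have he : Function.Injective e := (map_injective _).comp Subtype.val_injective
  obtain ⟨L, rfl⟩ : l ∈ Set.range (List.map e) := by
    rw [Set.range_list_map]
    exact fun S hS ↦ exists_map_valEmbedding_eq_iff.2 ((h.mem_iff S).1 hS)
  obtain ⟨u, hu, rfl⟩ := Option.map_eq_some_iff.1 (List.head?_map ▸ h.head?_eq)
  obtain ⟨v, hv, rfl⟩ := Option.map_eq_some_iff.1 (List.getLast?_map ▸ h.getLast?_eq)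
  refine ⟨u, v, ?_⟩
  have hc : L.IsChain (johnsonGraph p j).Adj := by
    refine ((List.isChain_map e).1 h.isChain).imp fun S T hST ↦ ?_
    exact johnsonGraph_adj_of_card_inter_add_one (by rwa [← card_map Fin.valEmbedding, map_inter])
  have hmem (T) : T ∈ L := by
    rw [← List.mem_map_of_injective he, h.mem_iff]
    exact exists_map_valEmbedding_eq_iff.1 ⟨T, rfl⟩
  obtain ⟨w, hw⟩ :=
    SimpleGraph.Walk.exists_isHamiltonian_of_isChain hc (h.nodup.of_map e) hmem hu hv
  exact ⟨w, rfl, rfl, hw⟩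

theorem johnsonGraph_hamiltonian_path_general (p j : ℕ) (hp : j ≤ p) :
    ∃ (u v : {S : Finset (Fin p) // S.card = j}) (walk : (johnsonGraph p j).Walk u v),
      u.1 = Finset.univ.filter (fun i : Fin p => (i : ℕ) < j) ∧
      v.1 = Finset.univ.filter (fun i : Fin p => p - j ≤ (i : ℕ)) ∧
      walk.IsHamiltonian := by
  obtain ⟨l, hl⟩ := (exists_isGrayCode j (p - j)).1
  rw [Nat.sub_add_cancel hp] at hl
  obtain ⟨u, v, w, hu, hv, hw⟩ := hl.exists_walk_johnsonGraph
  refine ⟨u, v, w, map_injective Fin.valEmbedding ?_, map_injective Fin.valEmbedding ?_, hw⟩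
  · rw [hu]; ext x; simpa [Fin.exists_iff] using fun hx : x < j ↦ hx.trans_le hp
  · rw [hv]; ext x; simp [Fin.exists_iff]

/-- **Lemma (Hamiltonian paths in Johnson graphs).**
For `1 ≤ j ≤ p`, the Johnson graph `G(j,p)` contains a Hamiltonian path that starts at the
set `{1,…,j}` and ends at the set `{p-j+1,…,p}`. -/
theorem johnsonGraph_hamiltonian_path (p j : ℕ) (hj : 1 ≤ j) (hp : j ≤ p) :
    ∃ (u v : {S : Finset (Fin p) // S.card = j}) (walk : (johnsonGraph p j).Walk u v),
      u.1 = Finset.univ.filter (fun i : Fin p => (i : ℕ) < j) ∧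
      v.1 = Finset.univ.filter (fun i : Fin p => p - j ≤ (i : ℕ)) ∧
      walk.IsHamiltonian :=
  johnsonGraph_hamiltonian_path_general p j hp
end

section
/- Let r, p, and j be integers with 2 ≤ r ≤ p and 1 ≤ j ≤ p−1. The graph whose vertices are the j-element subsets of {1,…,p} that contain at least one element smaller than r, with two vertices adjacent exactly when the corresponding subsets have j−1 elements in common, contains a Hamiltonian path. -/
/-!
Reversing `Fin p` (`i ↦ p - 1 - i`) turns "contains an index `i < r - 1`" into
"meets the top `a = r - 1` elements of `range p`", a condition compatible with removing the
largest element. The `(k + 1)`-subsets of `range (n + 1)` meeting its top `a + 1` elements are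
those of `range n` meeting its top `a` elements, followed by the sets `insert n T`, with `T`
running through the `k`-subsets of `range n` in reversed revolving-door order. The revolving door
starts at `range k` and ends inside `insert (n - 1) (range k)`; so every nonempty restricted list
ends at `insert (n - 1) (range k)`, and each seam is a single exchange of elements.
-/

/-- The restricted Johnson graph `G̃(j,p,r)`: vertices are the `j`-element subsets of
`{1,…,p}` (modelled as `Fin p`, with `i : Fin p` standing for the number `i+1`) that
contain at least one element strictly smaller than `r`, and two distinct subsets are
adjacent exactly when their intersection has `j-1` elements. -/
def restrictedJohnsonGraph (p j r : ℕ) :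
    SimpleGraph {S : Finset (Fin p) // S.card = j ∧ ∃ i ∈ S, (i : ℕ) + 1 < r} where
  Adj S T := S ≠ T ∧ (S.1 ∩ T.1).card = j - 1
  symm := by
    constructor
    intro S T h
    exact ⟨h.1.symm, by rw [Finset.inter_comm]; exact h.2⟩
  loopless := by
    constructor
    intro S h
    exact h.1 rfl

open Finset

namespace RestrictedJohnson

section JohnsonAdj
variable {α β : Type*} [DecidableEq α] [DecidableEq β] {S T Z : Finset α}

def JohnsonAdj (S T : Finset α) : Prop := #S = #T ∧ #(S ∩ T) + 1 = #S

theorem JohnsonAdj.symm (h : JohnsonAdj S T) : JohnsonAdj T S := by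
  obtain ⟨hc, hi⟩ := h
  exact ⟨hc.symm, by rw [inter_comm]; omega⟩

theorem JohnsonAdj.ne (h : JohnsonAdj S T) : S ≠ T := by
  rintro rfl
  simp [JohnsonAdj] at h

theorem johnsonAdj_map_iff (f : α ↪ β) : JohnsonAdj (S.map f) (T.map f) ↔ JohnsonAdj S T := by
  simp only [JohnsonAdj, ← map_inter, card_map]

theorem JohnsonAdj.insert {x : α} (hS : x ∉ S) (hT : x ∉ T) (h : JohnsonAdj S T) :
    JohnsonAdj (insert x S) (insert x T) := by
  have hST : x ∉ S ∩ T := fun hx => hS (mem_inter.mp hx).1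
  obtain ⟨hc, hi⟩ := h
  refine ⟨?_, ?_⟩
  · rw [card_insert_of_notMem hS, card_insert_of_notMem hT, hc]
  · rw [← insert_inter_distrib, card_insert_of_notMem hST, card_insert_of_notMem hS, hi]

theorem johnsonAdj_insert_of_subset {x : α} (hZS : Z ⊆ S) (hcard : #S = #Z + 1) (hx : x ∉ S) :
    JohnsonAdj S (insert x Z) := by
  have hZ : x ∉ Z := fun h => hx (hZS h)
  have hinter : S ∩ insert x Z = Z := by
    rw [inter_insert_of_notMem hx, inter_eq_right.mpr hZS]
  exact ⟨by rw [card_insert_of_notMem hZ, hcard], by rw [hinter, hcard]⟩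

end JohnsonAdj

section AppendReflected
variable {α : Type*} [DecidableEq α] {x : α} {l₁ l₂ : List (Finset α)}

def appendReflected (x : α) (l₁ l₂ : List (Finset α)) : List (Finset α) :=
  l₁ ++ (l₂.map (insert x)).reverse

theorem mem_appendReflected {S : Finset α} :
    S ∈ appendReflected x l₁ l₂ ↔ S ∈ l₁ ∨ ∃ T ∈ l₂, insert x T = S := by
  simp [appendReflected]

theorem head?_appendReflected (h : l₁ ≠ []) :
    (appendReflected x l₁ l₂).head? = l₁.head? := by
  simp [appendReflected, List.head?_append_of_ne_nil _ h]

theorem head?_appendReflected_nil : (appendReflected x [] l₂).head? = l₂.getLast?.map (insert x) := by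
  simp [appendReflected, List.head?_reverse, List.getLast?_map]

theorem getLast?_appendReflected (h : l₂ ≠ []) :
    (appendReflected x l₁ l₂).getLast? = l₂.head?.map (insert x) := by
  rw [appendReflected, List.getLast?_append_of_ne_nil _ (by simpa using h),
    List.getLast?_reverse, List.head?_map]

theorem nodup_appendReflected (h₁ : ∀ S ∈ l₁, x ∉ S) (h₂ : ∀ S ∈ l₂, x ∉ S)
    (hl₁ : l₁.Nodup) (hl₂ : l₂.Nodup) : (appendReflected x l₁ l₂).Nodup := by
  refine List.nodup_append.mpr ⟨hl₁, List.nodup_reverse.mpr (hl₂.map_on ?_), ?_⟩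
  · intro S hS T hT hST
    rw [← erase_insert (h₂ S hS), hST, erase_insert (h₂ T hT)]
  · rintro S hS _ hT rfl
    obtain ⟨T, -, rfl⟩ := List.mem_map.mp (List.mem_reverse.mp hT)
    exact h₁ _ hS (mem_insert_self x T)

theorem isChain_appendReflected (h₂ : ∀ S ∈ l₂, x ∉ S) (hl₁ : l₁.IsChain JohnsonAdj)
    (hl₂ : l₂.IsChain JohnsonAdj)
    (hseam : ∀ S ∈ l₁.getLast?, ∀ T ∈ l₂.getLast?, JohnsonAdj S (insert x T)) :
    (appendReflected x l₁ l₂).IsChain JohnsonAdj := by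
  refine List.isChain_append.mpr ⟨hl₁, ?_, ?_⟩
  · refine List.isChain_reverse.mpr ((List.isChain_map _).mpr ?_)
    exact hl₂.imp_of_mem_imp fun S T hS hT h => (h.insert (h₂ S hS) (h₂ T hT)).symm
  · intro S hS U hU
    rw [List.head?_reverse, List.getLast?_map] at hU
    obtain ⟨T, hT, rfl⟩ := Option.mem_map.mp hU
    exact hseam S hS T hT

end AppendReflected

def revolvingDoor : ℕ → ℕ → List (Finset ℕ)
  | _, 0 => [∅]
  | 0, _ + 1 => []
  | n + 1, k + 1 => appendReflected n (revolvingDoor n (k + 1)) (revolvingDoor n k)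

theorem mem_revolvingDoor : ∀ {n k : ℕ} {S : Finset ℕ},
    S ∈ revolvingDoor n k ↔ S ∈ powersetCard k (range n)
  | _, 0, _ => by simp [revolvingDoor]
  | 0, _ + 1, _ => by simp [revolvingDoor]; rintro rfl; simp
  | n + 1, k + 1, _ => by
    rw [revolvingDoor, mem_appendReflected, range_add_one,
      powersetCard_succ_insert notMem_range_self, mem_union, mem_image,
      mem_revolvingDoor, exists_congr fun _ => and_congr_left' mem_revolvingDoor]

theorem notMem_range_of_mem_powersetCard {n k : ℕ} {S : Finset ℕ}
    (h : S ∈ powersetCard k (range n)) : n ∉ S :=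
  fun hn => notMem_range_self ((mem_powersetCard.mp h).1 hn)

theorem notMem_of_mem_revolvingDoor {n k : ℕ} {S : Finset ℕ} (h : S ∈ revolvingDoor n k) :
    n ∉ S :=
  notMem_range_of_mem_powersetCard (mem_revolvingDoor.mp h)

theorem revolvingDoor_eq_nil {n k : ℕ} (h : n < k) : revolvingDoor n k = [] :=
  List.eq_nil_iff_forall_not_mem.mpr fun S hS => by
    have hempty : powersetCard k (range n) = ∅ := powersetCard_eq_empty.mpr (by simpa using h)
    simpa [hempty] using mem_revolvingDoor.mp hS

theorem range_mem_revolvingDoor {n k : ℕ} (h : k ≤ n) : range k ∈ revolvingDoor n k :=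
  mem_revolvingDoor.mpr (mem_powersetCard.mpr ⟨range_subset_range.mpr h, card_range k⟩)

theorem head?_revolvingDoor : ∀ {n k : ℕ}, k ≤ n → (revolvingDoor n k).head? = some (range k)
  | _, 0, _ => by simp [revolvingDoor]
  | n + 1, k + 1, h => by
    rw [revolvingDoor]
    rcases (Nat.le_of_lt_succ h).lt_or_eq with hk | rfl
    · rw [head?_appendReflected (List.ne_nil_of_mem (range_mem_revolvingDoor hk)),
        head?_revolvingDoor hk]
    · rw [revolvingDoor_eq_nil (Nat.lt_succ_self k), head?_appendReflected_nil]
      have hne : revolvingDoor k k ≠ [] := List.ne_nil_of_mem (range_mem_revolvingDoor le_rfl)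
      have hlast : (revolvingDoor k k).getLast hne = range k := by
        obtain ⟨hsub, hcard⟩ := mem_powersetCard.mp (mem_revolvingDoor.mp (List.getLast_mem hne))
        exact eq_of_subset_of_card_le hsub (by rw [hcard, card_range])
      rw [List.getLast?_eq_some_getLast hne, hlast, Option.map_some, range_add_one]

theorem getLast?_revolvingDoor : ∀ {n k : ℕ},
    ∀ S ∈ (revolvingDoor n (k + 1)).getLast?, S = insert (n - 1) (range k)
  | 0, _ => by simp [revolvingDoor]
  | n + 1, k => by
    by_cases hk : k ≤ n
    · rw [revolvingDoor, getLast?_appendReflected (List.ne_nil_of_mem (range_mem_revolvingDoor hk)),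
        head?_revolvingDoor hk]
      simp
    · simp [revolvingDoor_eq_nil (show n + 1 < k + 1 by omega)]

theorem getLast?_revolvingDoor_subset {n k : ℕ} :
    ∀ T ∈ (revolvingDoor n k).getLast?, T ⊆ insert (n - 1) (range k) := by
  cases k with
  | zero => simp [revolvingDoor]
  | succ k =>
    intro T hT
    rw [getLast?_revolvingDoor T hT]
    exact insert_subset_insert _ (range_subset_range.mpr k.le_succ)

theorem johnsonAdj_insert_getLast?_revolvingDoor {n k : ℕ} {S T : Finset ℕ}
    (hS : S ∈ powersetCard (k + 1) (range n)) (hS' : S = insert (n - 1) (range k))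
    (hT : T ∈ (revolvingDoor n k).getLast?) : JohnsonAdj S (insert n T) := by
  have hScard := (mem_powersetCard.mp hS).2
  have hTcard := (mem_powersetCard.mp (mem_revolvingDoor.mp (List.mem_of_mem_getLast? hT))).2
  exact johnsonAdj_insert_of_subset (hS' ▸ getLast?_revolvingDoor_subset T hT) (by omega)
    (notMem_range_of_mem_powersetCard hS)

theorem nodup_revolvingDoor : ∀ n k : ℕ, (revolvingDoor n k).Nodup
  | _, 0 => by simp [revolvingDoor]
  | 0, _ + 1 => by simp [revolvingDoor]
  | n + 1, k + 1 => nodup_appendReflected (fun _ => notMem_of_mem_revolvingDoor)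
      (fun _ => notMem_of_mem_revolvingDoor) (nodup_revolvingDoor n (k + 1))
      (nodup_revolvingDoor n k)

theorem isChain_revolvingDoor : ∀ n k : ℕ, (revolvingDoor n k).IsChain JohnsonAdj
  | _, 0 => by simp [revolvingDoor]
  | 0, _ + 1 => by simp [revolvingDoor]
  | n + 1, k + 1 => by
    refine isChain_appendReflected (fun _ => notMem_of_mem_revolvingDoor)
      (isChain_revolvingDoor n (k + 1)) (isChain_revolvingDoor n k) fun S hS T hT => ?_
    exact johnsonAdj_insert_getLast?_revolvingDoor
      (mem_revolvingDoor.mp (List.mem_of_mem_getLast? hS)) (getLast?_revolvingDoor S hS) hT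

def restrictedDoor : ℕ → ℕ → ℕ → List (Finset ℕ)
  | _, _, 0 => []
  | 0, _, _ + 1 => []
  | _ + 1, 0, _ + 1 => []
  | n + 1, k + 1, a + 1 => appendReflected n (restrictedDoor n (k + 1) a) (revolvingDoor n k)

theorem mem_restrictedDoor : ∀ {n k a : ℕ} {S : Finset ℕ},
    S ∈ restrictedDoor n k a ↔ S ∈ powersetCard k (range n) ∧ ∃ i ∈ S, n - a ≤ i
  | n, k, 0, S => by
    simp only [restrictedDoor, List.not_mem_nil, false_iff, not_and, not_exists, mem_powersetCard]
    exact fun h i hi hni => absurd (mem_range.mp (h.1 hi)) (by omega)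
  | 0, k, a + 1, S => by cases k <;> simp +contextual [restrictedDoor]
  | n + 1, 0, a + 1, S => by simp +contextual [restrictedDoor]
  | n + 1, k + 1, a + 1, S => by
    rw [restrictedDoor, mem_appendReflected, mem_restrictedDoor, range_add_one,
      powersetCard_succ_insert notMem_range_self, mem_union, mem_image,
      exists_congr fun _ => and_congr_left' mem_revolvingDoor, Nat.add_sub_add_right]
    constructor
    · rintro (⟨hS, hi⟩ | ⟨T, hT, rfl⟩)
      · exact ⟨Or.inl hS, hi⟩
      · exact ⟨Or.inr ⟨T, hT, rfl⟩, n, mem_insert_self n T, Nat.sub_le n a⟩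
    · rintro ⟨hS | hS, hi⟩
      · exact Or.inl ⟨hS, hi⟩
      · exact Or.inr hS

theorem restrictedDoor_ne_nil {n k a : ℕ} (hk : 1 ≤ k) (hkn : k ≤ n) (ha : 1 ≤ a) :
    restrictedDoor n k a ≠ [] := by
  refine List.ne_nil_of_mem (a := Ico (n - k) n) (mem_restrictedDoor.mpr ⟨?_, n - 1, ?_, ?_⟩)
  · exact mem_powersetCard.mpr ⟨fun i hi => mem_range.mpr (mem_Ico.mp hi).2, by simp; omega⟩
  · exact mem_Ico.mpr ⟨by omega, by omega⟩
  · omega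

theorem getLast?_restrictedDoor {n k a : ℕ} :
    ∀ S ∈ (restrictedDoor n (k + 1) a).getLast?, S = insert (n - 1) (range k) := by
  intro S hS
  obtain ⟨hS', i, hi, hni⟩ := mem_restrictedDoor.mp (List.mem_of_mem_getLast? hS)
  have hkn : k + 1 ≤ n := by simpa using powersetCard_nonempty.mp ⟨S, hS'⟩
  have hin := mem_range.mp ((mem_powersetCard.mp hS').1 hi)
  obtain ⟨n, rfl⟩ : ∃ m, n = m + 1 := ⟨n - 1, by omega⟩
  obtain ⟨a, rfl⟩ : ∃ b, a = b + 1 := ⟨a - 1, by omega⟩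
  rw [restrictedDoor, getLast?_appendReflected
    (List.ne_nil_of_mem (range_mem_revolvingDoor (by omega))), head?_revolvingDoor (by omega)] at hS
  simpa using hS.symm

theorem nodup_restrictedDoor : ∀ n k a : ℕ, (restrictedDoor n k a).Nodup
  | _, _, 0 => by simp [restrictedDoor]
  | 0, k, _ + 1 => by cases k <;> simp [restrictedDoor]
  | _ + 1, 0, _ + 1 => by simp [restrictedDoor]
  | n + 1, k + 1, a + 1 => nodup_appendReflected
      (fun _ h => notMem_range_of_mem_powersetCard (mem_restrictedDoor.mp h).1)
      (fun _ => notMem_of_mem_revolvingDoor) (nodup_restrictedDoor n (k + 1) a)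
      (nodup_revolvingDoor n k)

theorem isChain_restrictedDoor : ∀ n k a : ℕ, (restrictedDoor n k a).IsChain JohnsonAdj
  | _, _, 0 => by simp [restrictedDoor]
  | 0, k, _ + 1 => by cases k <;> simp [restrictedDoor]
  | _ + 1, 0, _ + 1 => by simp [restrictedDoor]
  | n + 1, k + 1, a + 1 => by
    refine isChain_appendReflected (fun _ => notMem_of_mem_revolvingDoor)
      (isChain_restrictedDoor n (k + 1) a) (isChain_revolvingDoor n k) fun S hS T hT => ?_
    exact johnsonAdj_insert_getLast?_revolvingDoor
      (mem_restrictedDoor.mp (List.mem_of_mem_getLast? hS)).1 (getLast?_restrictedDoor S hS) hT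

def revVal (n : ℕ) : Fin n ↪ ℕ := Fin.revPerm.toEmbedding.trans Fin.valEmbedding

theorem revVal_apply {n : ℕ} (i : Fin n) : revVal n i = n - (i + 1) := by
  simp [revVal]

theorem map_revVal_univ (n : ℕ) : univ.map (revVal n) = range n := by
  rw [revVal, ← map_map, map_univ_equiv, Fin.map_valEmbedding_univ, Nat.Iio_eq_range]

theorem map_revVal_mem_restrictedDoor {n k a : ℕ} {T : Finset (Fin n)} :
    T.map (revVal n) ∈ restrictedDoor n k a ↔ #T = k ∧ ∃ i ∈ T, (i : ℕ) < a := by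
  rw [mem_restrictedDoor, mem_powersetCard, card_map, ← map_revVal_univ, map_subset_map]
  simp only [subset_univ, true_and, mem_map, exists_exists_and_eq_and, revVal_apply]
  exact and_congr_right' (exists_congr fun i => and_congr_right' (by omega))

theorem exists_map_revVal_eq {n : ℕ} {S : Finset ℕ} (h : S ⊆ range n) :
    ∃ T : Finset (Fin n), T.map (revVal n) = S := by
  obtain ⟨T, -, rfl⟩ := subset_map_iff.mp (map_revVal_univ n ▸ h)
  exact ⟨T, rfl⟩

end RestrictedJohnson

theorem SimpleGraph.exists_isHamiltonian_of_list {V : Type*} [DecidableEq V] (G : SimpleGraph V)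
    {l : List V} (hne : l ≠ []) (hnodup : l.Nodup) (hchain : l.IsChain G.Adj)
    (hcover : ∀ v, v ∈ l) : ∃ (u v : V) (w : G.Walk u v), w.IsHamiltonian :=
  ⟨_, _, .ofSupport l hne hchain, fun v => by
    rw [Walk.support_ofSupport]
    exact List.count_eq_one_of_mem hnodup (hcover v)⟩

theorem SimpleGraph.exists_isHamiltonian_of_injective {V α : Type*} [DecidableEq V]
    (G : SimpleGraph V) {R : α → α → Prop} {f : V → α} (hf : Function.Injective f)
    (hR : ∀ u v, R (f u) (f v) → G.Adj u v) {l : List α} (hne : l ≠ []) (hnodup : l.Nodup)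
    (hchain : l.IsChain R) (hl : ∀ x, x ∈ l ↔ x ∈ Set.range f) :
    ∃ (u v : V) (w : G.Walk u v), w.IsHamiltonian := by
  obtain ⟨l, rfl⟩ : l ∈ Set.range (List.map f) := by
    rw [Set.range_list_map]
    exact fun x hx => (hl x).mp hx
  exact G.exists_isHamiltonian_of_list (by simpa using hne) hnodup.of_map
    (((List.isChain_map f).mp hchain).imp hR)
    fun v => (List.mem_map_of_injective hf).mp ((hl (f v)).mpr ⟨v, rfl⟩)

open RestrictedJohnson

theorem restrictedJohnsonGraph_adj_of_johnsonAdj {p j r : ℕ}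
    {u v : {S : Finset (Fin p) // S.card = j ∧ ∃ i ∈ S, (i : ℕ) + 1 < r}}
    (h : JohnsonAdj u.1 v.1) : (restrictedJohnsonGraph p j r).Adj u v := by
  refine ⟨fun huv => h.ne (congrArg Subtype.val huv), ?_⟩
  have hinter := h.2
  rw [u.2.1] at hinter
  exact Nat.eq_sub_of_add_eq hinter

theorem restrictedJohnsonGraph_hamiltonian_path_general (p j r : ℕ)
    (hr1 : 2 ≤ r) (hj1 : 1 ≤ j) (hj2 : j ≤ p - 1) :
    ∃ (u v : {S : Finset (Fin p) // S.card = j ∧ ∃ i ∈ S, (i : ℕ) + 1 < r})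
      (walk : (restrictedJohnsonGraph p j r).Walk u v), walk.IsHamiltonian := by
  have hmem {T : Finset (Fin p)} :
      T.map (revVal p) ∈ restrictedDoor p j (r - 1) ↔ #T = j ∧ ∃ i ∈ T, (i : ℕ) + 1 < r := by
    rw [map_revVal_mem_restrictedDoor]
    exact and_congr_right' (exists_congr fun i => and_congr_right' (by omega))
  refine (restrictedJohnsonGraph p j r).exists_isHamiltonian_of_injective
    (f := fun v => v.1.map (revVal p)) ((map_injective _).comp Subtype.val_injective)
    (fun u v h => restrictedJohnsonGraph_adj_of_johnsonAdj ((johnsonAdj_map_iff _).mp h))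
    (l := restrictedDoor p j (r - 1)) (restrictedDoor_ne_nil hj1 (by omega) (by omega))
    (nodup_restrictedDoor ..)
    (isChain_restrictedDoor ..) fun S => ⟨fun hS => ?_, ?_⟩
  · obtain ⟨T, rfl⟩ := exists_map_revVal_eq (mem_powersetCard.mp (mem_restrictedDoor.mp hS).1).1
    exact ⟨⟨T, hmem.mp hS⟩, rfl⟩
  · rintro ⟨v, rfl⟩
    exact hmem.mpr v.2

/-- **Lemma (Hamiltonian paths in restricted Johnson graphs).**
For `2 ≤ r ≤ p` and `1 ≤ j ≤ p-1`, the graph whose vertices are the `j`-element subsets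
of `{1,…,p}` containing at least one element smaller than `r`, with adjacency given by
having `j-1` common elements, contains a Hamiltonian path. -/
theorem restrictedJohnsonGraph_hamiltonian_path (p j r : ℕ)
    (hr1 : 2 ≤ r) (hr2 : r ≤ p) (hj1 : 1 ≤ j) (hj2 : j ≤ p - 1) :
    ∃ (u v : {S : Finset (Fin p) // S.card = j ∧ ∃ i ∈ S, (i : ℕ) + 1 < r})
      (walk : (restrictedJohnsonGraph p j r).Walk u v), walk.IsHamiltonian :=
  restrictedJohnsonGraph_hamiltonian_path_general p j r hr1 hj1 hj2
end

section
/- Let C1 and C2 be two size-k committees with |C1 ∩ C2| = k−1. Then the range of the ℚ-linear map α_{C1,C2} : ℚ^L → ℚ^{[m]_k} is a ℚ-subspace of dimension C(m,k) − 1. -/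
/-!
Write `e_I` for the indicator vector of a position set `I`. Each vote `π` contributes
`e_{π(C1)} - e_{π(C2)}` to `α_{C1,C2}`, so the range lies in the span of the differences
`e_I - e_J` of `k`-sets, i.e. in the vector span of the affinely independent points `e_I`,
which has dimension `C(m,k) - 1`. Conversely, `C2` arises from `C1` by exchanging one
candidate, so every exchange pair `(I, I - p + q)` of positions is `(π(C1), π(C2))` for some
vote `π`; as any two `k`-sets are joined by a chain of exchanges, all `e_I - e_J` lie in the
range.
-/

open Finset

/-- The committee position-difference function `α_{C1,C2}`:
`α_{C1,C2}(P)[I]` is the total (rational) number of votes in `P` that rank `C1` on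
position `I` minus the total number of votes in `P` that rank `C2` on position `I`. -/
def alphaFun {A : Type*} [Fintype A] [DecidableEq A] (C1 C2 : Finset A)
    (P : Vote A → ℚ) (I : Finset (Fin (Fintype.card A))) : ℚ :=
  ∑ π : Vote A, P π * ((if π.pos C1 = I then 1 else 0) - (if π.pos C2 = I then 1 else 0))

/-- `α_{C1,C2}` as a `ℚ`-linear map from `ℚ^L` to `ℚ^{[m]_k}` (realized inside
`ℚ^{Finset (Fin m)}`; it vanishes on coordinates that are not committee positions). -/
def alphaMap {A : Type*} [Fintype A] [DecidableEq A] (C1 C2 : Finset A) :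
    (Vote A → ℚ) →ₗ[ℚ] (Finset (Fin (Fintype.card A)) → ℚ) where
  toFun P := alphaFun C1 C2 P
  map_add' P Q := by
    funext I
    simp only [alphaFun, Pi.add_apply, add_mul, Finset.sum_add_distrib]
  map_smul' q P := by
    funext I
    simp only [alphaFun, Pi.smul_apply, smul_eq_mul, RingHom.id_apply, Finset.mul_sum,
      mul_assoc]

namespace Finset

variable {α : Type*} [DecidableEq α]

theorem image_swap_of_mem_iff {s : Finset α} {x y : α} (h : x ∈ s ↔ y ∈ s) :
    s.image (Equiv.swap x y) = s := by
  refine eq_of_subset_of_card_le (fun z hz => ?_)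
    (card_image_of_injective _ (Equiv.injective _)).ge
  obtain ⟨w, hw, rfl⟩ := mem_image.mp hz
  rw [Equiv.swap_apply_def]
  split_ifs with hwx hwy
  · exact h.mp (hwx ▸ hw)
  · exact h.mpr (hwy ▸ hw)
  · exact hw

theorem reflTransGen_of_card_eq {r : Finset α → Finset α → Prop} {n : ℕ}
    (hr : ∀ I, #I = n → ∀ p ∈ I, ∀ q ∉ I, r I (insert q (I.erase p)))
    {I J : Finset α} (hI : #I = n) (hJ : #J = n) : Relation.ReflTransGen r I J := by
  induction hd : #(I \ J) generalizing I with
  | zero =>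
    have : I = J := eq_of_subset_of_card_le (sdiff_eq_empty_iff_subset.mp (card_eq_zero.mp hd))
      (by omega)
    exact this ▸ .refl
  | succ d ih =>
    obtain ⟨p, hp⟩ : (I \ J).Nonempty := card_pos.mp (by omega)
    obtain ⟨q, hq⟩ : (J \ I).Nonempty :=
      card_pos.mp (by rw [← card_sdiff_comm (hI.trans hJ.symm)]; omega)
    rw [mem_sdiff] at hp hq
    have hcard : #(insert q (I.erase p)) = n := by
      rw [card_insert_of_notMem (fun h => hq.2 (mem_of_mem_erase h)), card_erase_of_mem hp.1]
      have := card_pos.mpr ⟨p, hp.1⟩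
      omega
    have hdist : insert q (I.erase p) \ J = (I \ J).erase p := by
      ext x
      simp only [mem_sdiff, mem_insert, mem_erase]
      constructor
      · rintro ⟨rfl | hx, hxJ⟩
        exacts [absurd hq.1 hxJ, ⟨hx.1, hx.2, hxJ⟩]
      · exact fun ⟨hxp, hxI, hxJ⟩ => ⟨Or.inr ⟨hxp, hxI⟩, hxJ⟩
    refine .head (hr I hI p hp.1 q hq.2) (ih hcard ?_)
    rw [hdist, card_erase_of_mem (mem_sdiff.mpr hp), hd, Nat.add_sub_cancel]

theorem exists_eq_insert_erase_of_card_inter {s t : Finset α} (hst : #s = #t)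
    (hinter : #(s ∩ t) + 1 = #s) : ∃ a ∈ s, ∃ b ∉ s, t = insert b (s.erase a) := by
  obtain ⟨a, ha⟩ := card_eq_one.mp (show #(s \ t) = 1 by grind [card_inter_add_card_sdiff])
  obtain ⟨b, hb⟩ :=
    card_eq_one.mp (show #(t \ s) = 1 by grind [card_inter_add_card_sdiff, inter_comm])
  refine ⟨a, (mem_sdiff.mp (ha ▸ mem_singleton_self a)).1,
    b, (mem_sdiff.mp (hb ▸ mem_singleton_self b)).2, ?_⟩
  rw [← sdiff_singleton_eq_erase, ← ha, sdiff_sdiff_right_self, insert_eq, ← hb, inf_eq_inter,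
    inter_comm, sdiff_union_inter]

end Finset

namespace Equiv

variable {α β : Type*} [DecidableEq β]

theorem exists_image_eq (e : α ≃ β) {s : Finset α} {t : Finset β} (h : #s = #t) :
    ∃ π : α ≃ β, s.image π = t := by
  have := Set.powersetCard.isPretransitive (α := β) (n := #t)
  obtain ⟨σ, hσ⟩ := MulAction.exists_smul_eq (Perm β)
    (⟨s.image e, by simp [card_image_of_injective _ e.injective, h]⟩ : Set.powersetCard β #t)
    ⟨t, rfl⟩
  refine ⟨e.trans σ, ?_⟩
  simpa [smul_finset_def, image_image] using congrArg Subtype.val hσ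

theorem image_trans_swap_eq {π : α ≃ β} {s : Finset α} {t : Finset β} (hπ : s.image π = t)
    {x : α} {y : β} (hxy : π x ∈ t ↔ y ∈ t) : s.image (π.trans (swap (π x) y)) = t := by
  rw [coe_trans, ← image_image, hπ, image_swap_of_mem_iff hxy]

theorem exists_image_eq_and_apply_eq [DecidableEq α] (e : α ≃ β) {s : Finset α}
    {t : Finset β} (h : #s = #t) {a b : α} {p q : β} (ha : a ∈ s) (hb : b ∉ s) (hp : p ∈ t)
    (hq : q ∉ t) : ∃ π : α ≃ β, s.image π = t ∧ π a = p ∧ π b = q := by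
  obtain ⟨π, hπ⟩ := e.exists_image_eq h
  have hπa : π a ∈ t := hπ ▸ mem_image_of_mem π ha
  set π₁ := π.trans (swap (π a) p)
  have hπ₁ : s.image π₁ = t := image_trans_swap_eq hπ (iff_of_true hπa hp)
  have hπ₁a : π₁ a = p := swap_apply_left _ _
  have hπ₁b : π₁ b ∉ t := hπ₁ ▸ fun h => hb (π₁.injective.mem_finset_image.mp h)
  refine ⟨π₁.trans (swap (π₁ b) q), image_trans_swap_eq hπ₁ (iff_of_false hπ₁b hq), ?_,
    swap_apply_left _ _⟩
  rw [trans_apply, hπ₁a]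
  exact swap_apply_of_ne_of_ne (fun h => hπ₁b (h ▸ hp)) (fun h => hq (h ▸ hp))

end Equiv

section Alpha

variable {A : Type*} [Fintype A] [DecidableEq A]

theorem alphaMap_apply (C1 C2 : Finset A) (P : Vote A → ℚ) :
    alphaMap C1 C2 P = ∑ π, P π • (Pi.single (π.pos C1) 1 - Pi.single (π.pos C2) 1) := by
  funext I
  simp [alphaMap, alphaFun, Pi.single_apply, eq_comm]

theorem alphaMap_single (C1 C2 : Finset A) (π : Vote A) :
    alphaMap C1 C2 (Pi.single π 1) = Pi.single (π.pos C1) 1 - Pi.single (π.pos C2) 1 := by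
  simp [alphaMap_apply, Pi.single_apply]

theorem single_sub_single_insert_erase_mem_range_alphaMap {C1 C2 : Finset A} (hC : #C1 = #C2)
    (hinter : #(C1 ∩ C2) + 1 = #C1) {I : Finset (Fin (Fintype.card A))} (hI : #I = #C1)
    {p q : Fin (Fintype.card A)} (hp : p ∈ I) (hq : q ∉ I) :
    Pi.single I 1 - Pi.single (insert q (I.erase p)) 1 ∈ LinearMap.range (alphaMap C1 C2) := by
  obtain ⟨a, ha, b, hb, rfl⟩ := exists_eq_insert_erase_of_card_inter hC hinter
  obtain ⟨π, hπ, hπa, hπb⟩ :=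
    (Fintype.equivFin A).exists_image_eq_and_apply_eq hI.symm ha hb hp hq
  refine ⟨Pi.single π 1, ?_⟩
  rw [alphaMap_single, Vote.pos, Vote.pos, image_insert, image_erase π.injective, hπ, hπa, hπb]

theorem single_sub_single_mem_range_alphaMap {k : ℕ} {C1 C2 : Finset A} (hC1 : #C1 = k)
    (hC2 : #C2 = k) (hinter : #(C1 ∩ C2) = k - 1) {I J : Finset (Fin (Fintype.card A))}
    (hI : #I = k) (hJ : #J = k) :
    Pi.single I 1 - Pi.single J 1 ∈ LinearMap.range (alphaMap C1 C2) := by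
  -- `k - 1` is truncated, but an exchange step out of `I` needs `p ∈ I`, hence `1 ≤ k`.
  have hpath := reflTransGen_of_card_eq (r := fun I J =>
      Pi.single I (1 : ℚ) - Pi.single J 1 ∈ LinearMap.range (alphaMap C1 C2))
    (fun I hI p hp q hq => single_sub_single_insert_erase_mem_range_alphaMap
      (hC1.trans hC2.symm) (by have := card_pos.mpr ⟨p, hp⟩; omega) (hI.trans hC1.symm) hp hq)
    hI hJ
  clear hI hJ
  induction hpath using Relation.ReflTransGen.head_induction_on with
  | refl => simp
  | head hstep _ ih => simpa using add_mem hstep ih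

theorem range_alphaMap_eq_vectorSpan {k : ℕ} {C1 C2 : Finset A} (hC1 : #C1 = k)
    (hC2 : #C2 = k) (hinter : #(C1 ∩ C2) = k - 1) :
    LinearMap.range (alphaMap C1 C2) =
      vectorSpan ℚ ((Pi.single · (1 : ℚ)) '' {I : Finset (Fin (Fintype.card A)) | #I = k}) := by
  have hcard (π : Vote A) {C : Finset A} (hC : #C = k) : #(π.pos C) = k := by
    rw [Vote.pos, card_image_of_injective _ π.injective, hC]
  apply le_antisymm
  · rintro _ ⟨P, rfl⟩
    rw [alphaMap_apply]
    exact sum_mem fun π _ => Submodule.smul_mem _ _ (vsub_mem_vectorSpan ℚ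
      (Set.mem_image_of_mem _ (hcard π hC1)) (Set.mem_image_of_mem _ (hcard π hC2)))
  · rw [vectorSpan_def, Submodule.span_le]
    rintro _ ⟨_, ⟨I, hI, rfl⟩, _, ⟨J, hJ, rfl⟩, rfl⟩
    exact single_sub_single_mem_range_alphaMap hC1 hC2 hinter hI hJ

end Alpha

/-- **Lemma (dimension of the range of `α_{C1,C2}`).**
For two size-`k` committees `C1, C2` with `|C1 ∩ C2| = k - 1`, the range of the `ℚ`-linear
map `α_{C1,C2}` has dimension `C(m,k) - 1`. -/
theorem alphaMap_range_finrank {A : Type*} [Fintype A] [DecidableEq A] {k : ℕ}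
    (hk : k ≤ Fintype.card A) (C1 C2 : Finset A)
    (hC1 : C1.card = k) (hC2 : C2.card = k) (hinter : (C1 ∩ C2).card = k - 1) :
    Module.finrank ℚ (LinearMap.range (alphaMap C1 C2)) =
      Nat.choose (Fintype.card A) k - 1 := by
  rw [range_alphaMap_eq_vectorSpan hC1 hC2 hinter, ← coe_filter_univ, ← coe_image]
  refine (Pi.linearIndependent_single_one _ ℚ).affineIndependent.finrank_vectorSpan_image_finset ?_
  rw [← Fintype.card_subtype, Fintype.card_finset_len, Fintype.card_fin]
  exact (Nat.sub_add_cancel (Nat.choose_pos hk)).symm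
end

section
/- A set S ⊆ ℝ^n is ℚ-convex if and only if S = ℚ^n ∩ conv(S), where conv(S) denotes the convex hull of S in ℝ^n. -/
/-!
A rational point `x` of `conv(S)` is, by Carathéodory, a positive convex combination of affinely
independent points of `S`. If these points are rational, the weights are rational too: applying a
`ℚ`-linear retraction `ℝ → ℚ` to the weights yields another solution of the same rational linear
system, and affine independence makes the solution unique. So `x` lies in the `ℚ`-convex hull of
`S`, which is `S` itself when `S` is `ℚ`-convex.
-/

/-- A point of `ℝ^n` all of whose coordinates are rational. -/
def RatPoint {n : ℕ} (x : Fin n → ℝ) : Prop := ∀ i, ∃ q : ℚ, x i = (q : ℝ)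

/-- A set `S ⊆ ℝ^n` is `ℚ`-convex if `S ⊆ ℚ^n` and `S` is closed under convex
combinations with rational coefficients. -/
def QConvex {n : ℕ} (S : Set (Fin n → ℝ)) : Prop :=
  (∀ x ∈ S, RatPoint x) ∧
  ∀ s1 ∈ S, ∀ s2 ∈ S, ∀ q : ℚ, 0 ≤ q → q ≤ 1 →
    (q : ℝ) • s1 + ((1 : ℝ) - (q : ℝ)) • s2 ∈ S

open Finset

lemma Real.exists_ratLinearMap_leftInverse_ratCast : ∃ ρ : ℝ →ₗ[ℚ] ℚ, ∀ q : ℚ, ρ q = q := by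
  obtain ⟨ρ, hρ⟩ := (Algebra.linearMap ℚ ℝ).exists_leftInverse_of_injective
    (LinearMap.ker_eq_bot.2 Rat.cast_injective)
  exact ⟨ρ, fun q => LinearMap.congr_fun hρ q⟩

lemma AffineIndependent.exists_rat_weights {n : ℕ} {ι : Type*} [Fintype ι]
    {z : ι → Fin n → ℝ} (hz : AffineIndependent ℝ z) (hzq : ∀ i, RatPoint (z i))
    {x : Fin n → ℝ} (hxq : RatPoint x) {w : ι → ℝ} (hw : ∑ i, w i = 1)
    (hwz : ∑ i, w i • z i = x) : ∀ i, ∃ q : ℚ, w i = q := by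
  obtain ⟨ρ, hρ⟩ := Real.exists_ratLinearMap_leftInverse_ratCast
  have hρ_mul (r : ℝ) (q : ℚ) : ρ (r * q) = ρ r * q := by
    rw [mul_comm, ← Rat.smul_def, map_smul, smul_eq_mul, mul_comm]
  have hρw : ∀ i ∈ univ, ((ρ (w i) : ℚ) : ℝ) = w i := by
    refine hz.eq_of_sum_eq_sum ?_ ?_
    · rw [hw, ← Rat.cast_sum, ← map_sum, hw, ← Rat.cast_one, hρ, Rat.cast_one]
    · ext j
      obtain ⟨q, hq⟩ := hxq j
      have hzj (i : ι) : ((ρ (w i) : ℚ) : ℝ) * z i j = ((ρ (w i * z i j) : ℚ) : ℝ) := by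
        obtain ⟨p, hp⟩ := hzq i j
        rw [hp, hρ_mul, Rat.cast_mul]
      have hxj : ∑ i, w i * z i j = x j := by simpa using congrFun hwz j
      simp only [Finset.sum_apply, Pi.smul_apply, smul_eq_mul, hzj, ← Rat.cast_sum, ← map_sum,
        hxj, hq, hρ]
  exact fun i => ⟨ρ (w i), (hρw i (mem_univ i)).symm⟩

lemma convex_rat_setOf_ratPoint {n : ℕ} : Convex ℚ {x : Fin n → ℝ | RatPoint x} := by
  intro x hx y hy a b _ _ _ i
  obtain ⟨p, hp⟩ := hx i
  obtain ⟨q, hq⟩ := hy i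
  exact ⟨a * p + b * q, by simp [Rat.smul_def, hp, hq]⟩

lemma qConvex_iff_convex_rat {n : ℕ} {S : Set (Fin n → ℝ)} :
    QConvex S ↔ (∀ x ∈ S, RatPoint x) ∧ Convex ℚ S := by
  have hcast (q : ℚ) (x y : Fin n → ℝ) :
      (q : ℝ) • x + ((1 : ℝ) - q) • y = q • x + (1 - q) • y := by
    rw [← Rat.cast_one, ← Rat.cast_sub, Rat.cast_smul_eq_qsmul, Rat.cast_smul_eq_qsmul]
  refine and_congr_right fun _ => ⟨fun h x hx y hy a b ha _ hab => ?_,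
    fun h x hx y hy q hq0 hq1 => ?_⟩
  · obtain rfl : b = 1 - a := by linarith
    exact hcast a x y ▸ h x hx y hy a ha (by linarith)
  · exact hcast q x y ▸ h hx hy hq0 (sub_nonneg.2 hq1) (add_sub_cancel q 1)

lemma setOf_ratPoint_inter_convexHull_real_subset_convexHull_rat {n : ℕ}
    {S : Set (Fin n → ℝ)} (hS : ∀ x ∈ S, RatPoint x) :
    {x | RatPoint x} ∩ convexHull ℝ S ⊆ convexHull ℚ S := by
  rintro x ⟨hxq, hx⟩
  obtain ⟨ι, _, z, w, hzS, hz, hw0, hw1, rfl⟩ := eq_pos_convex_span_of_mem_convexHull hx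
  choose q hq using hz.exists_rat_weights (fun i => hS _ (hzS ⟨i, rfl⟩)) hxq hw1 rfl
  have hq0 (i : ι) : 0 ≤ q i := by exact_mod_cast hq i ▸ (hw0 i).le
  have hq1 : ∑ i, q i = 1 := by exact_mod_cast (by simpa [hq] using hw1 : ∑ i, (q i : ℝ) = 1)
  have hwq : ∑ i, w i • z i = ∑ i, q i • z i := by simp [hq, Rat.cast_smul_eq_qsmul]
  rw [hwq]
  exact (convex_convexHull ℚ S).sum_mem (fun i _ => hq0 i) hq1
    (fun i _ => subset_convexHull ℚ S (hzS ⟨i, rfl⟩))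

/-- **Lemma (Young).** A set `S ⊆ ℝ^n` is `ℚ`-convex if and only if
`S = ℚ^n ∩ conv(S)`. -/
theorem qConvex_iff_eq_ratPoints_inter_convexHull {n : ℕ} (S : Set (Fin n → ℝ)) :
    QConvex S ↔ S = {x | RatPoint x} ∩ convexHull ℝ S := by
  rw [qConvex_iff_convex_rat]
  constructor
  · rintro ⟨hSq, hS⟩
    refine (Set.subset_inter hSq (subset_convexHull ℝ S)).antisymm ?_
    exact (setOf_ratPoint_inter_convexHull_real_subset_convexHull_rat hSq).trans
      (convexHull_min subset_rfl hS)
  · intro h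
    rw [h]
    exact ⟨fun x hx => hx.1, convex_rat_setOf_ratPoint.inter ((convex_convexHull ℝ S).lift ℚ)⟩
end

section
/- Let f be a k-decision rule on integer voting situations ℕ^L that is neutral, independent of symmetric profiles (f(P + ℓ·e) = f(P) for all P ∈ ℕ^L and ℓ ∈ ℕ, where e is the voting situation assigning multiplicity 1 to every vote), and homogeneous (f(ℓ·P) = f(P) for all P ∈ ℕ^L and positive ℓ ∈ ℕ). Then there exists a unique k-decision rule g on rational voting situations ℚ^L such that g agrees with f on ℕ^L and, for every Q ∈ ℚ^L and every positive integer ℓ, g(Q − ℓ·e) = g(Q) and g(Q/ℓ) = g(Q). -/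
open Finset

/-! Writing a rational voting situation as `Q = d⁻¹ • (P - n • e)` with `P` integer and `d > 0`,
the two invariances force `g(Q) = f(P)`; this is well defined because two such representations
`(P₁, n₁, d₁)`, `(P₂, n₂, d₂)` of `Q` satisfy `d₂ • P₁ + (d₁ n₂) • e = d₁ • P₂ + (d₂ n₁) • e`,
on which `f` agrees with both `f(P₁)` and `f(P₂)` by homogeneity and independence of symmetric
profiles. -/

section NatRep

variable {ι : Type*}

def IsNatRep (Q : ι → ℚ) (P : ι → ℕ) : Prop :=
  ∃ n d : ℕ, 0 < d ∧ Q = (d : ℚ)⁻¹ • ((fun i => (P i : ℚ)) - n • fun _ => 1)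

theorem exists_nat_mul_eq_int [Fintype ι] (Q : ι → ℚ) :
    ∃ d : ℕ, 0 < d ∧ ∀ i, ∃ z : ℤ, (d : ℚ) * Q i = z := by
  refine ⟨∏ i, (Q i).den, Finset.prod_pos fun i _ => (Q i).pos, fun i => ?_⟩
  obtain ⟨c, hc⟩ := Finset.dvd_prod_of_mem (fun i => (Q i).den) (Finset.mem_univ i)
  refine ⟨(Q i).num * c, ?_⟩
  rw [hc]
  push_cast
  rw [← Rat.mul_den_eq_num]
  ring

theorem exists_isNatRep [Fintype ι] (Q : ι → ℚ) : ∃ P, IsNatRep Q P := by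
  obtain ⟨d, hd, hz⟩ := exists_nat_mul_eq_int Q
  choose z hz using hz
  obtain ⟨M, hM⟩ := Finite.exists_le fun i => -z i
  refine ⟨fun i => (z i + M.toNat).toNat, M.toNat, d, hd, funext fun i => ?_⟩
  have hP : (((z i + M.toNat).toNat : ℕ) : ℚ) = z i + M.toNat := by
    exact_mod_cast Int.toNat_of_nonneg (by linarith [hM i, Int.self_le_toNat M])
  have hd' : (d : ℚ) ≠ 0 := by exact_mod_cast hd.ne'
  simp only [nsmul_eq_mul, Pi.smul_apply, Pi.sub_apply, Pi.mul_apply, Pi.natCast_apply, mul_one,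
    smul_eq_mul]
  rw [hP]
  field_simp
  linarith [hz i]

theorem IsNatRep.nat_cast (P : ι → ℕ) : IsNatRep (fun i => (P i : ℚ)) P :=
  ⟨0, 1, one_pos, by simp⟩

theorem IsNatRep.sub_nsmul_one {Q : ι → ℚ} {P : ι → ℕ} (h : IsNatRep Q P) (ℓ : ℕ) :
    IsNatRep (Q - ℓ • fun _ => 1) P := by
  obtain ⟨n, d, hd, rfl⟩ := h
  refine ⟨n + d * ℓ, d, hd, ?_⟩
  have hd' : (d : ℚ) ≠ 0 := by exact_mod_cast hd.ne'
  funext i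
  simp only [nsmul_eq_mul, Pi.sub_apply, Pi.smul_apply, Pi.mul_apply, Pi.natCast_apply, mul_one,
    smul_eq_mul, Nat.cast_add, Nat.cast_mul, Pi.add_apply]
  field_simp
  ring

theorem IsNatRep.inv_smul {Q : ι → ℚ} {P : ι → ℕ} (h : IsNatRep Q P) {ℓ : ℕ} (hℓ : 0 < ℓ) :
    IsNatRep ((ℓ : ℚ)⁻¹ • Q) P := by
  obtain ⟨n, d, hd, rfl⟩ := h
  refine ⟨n, d * ℓ, Nat.mul_pos hd hℓ, ?_⟩
  rw [smul_smul, Nat.cast_mul, mul_inv_rev]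

theorem IsNatRep.exists_nsmul_add_eq {Q : ι → ℚ} {P₁ P₂ : ι → ℕ} (h₁ : IsNatRep Q P₁)
    (h₂ : IsNatRep Q P₂) : ∃ d₁ d₂ m₁ m₂ : ℕ, 0 < d₁ ∧ 0 < d₂ ∧
      d₂ • P₁ + m₂ • (fun _ => 1) = d₁ • P₂ + m₁ • fun _ => 1 := by
  obtain ⟨n₁, d₁, hd₁, rfl⟩ := h₁
  obtain ⟨n₂, d₂, hd₂, h⟩ := h₂
  refine ⟨d₁, d₂, d₂ * n₁, d₁ * n₂, hd₁, hd₂, funext fun i => ?_⟩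
  have hi := congrFun h i
  have hd₁' : (d₁ : ℚ) ≠ 0 := by exact_mod_cast hd₁.ne'
  have hd₂' : (d₂ : ℚ) ≠ 0 := by exact_mod_cast hd₂.ne'
  simp only [nsmul_eq_mul, Pi.smul_apply, Pi.sub_apply, Pi.mul_apply, Pi.natCast_apply, mul_one,
    smul_eq_mul] at hi
  field_simp at hi
  simp only [smul_eq_mul, Pi.add_apply, Pi.smul_apply, mul_one]
  exact_mod_cast (by linarith : (d₂ * P₁ i + d₁ * n₂ : ℚ) = d₁ * P₂ i + d₂ * n₁)

end NatRep

namespace DecisionRule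

variable {A : Type*} [Fintype A] [DecidableEq A] {k : ℕ}

theorem F_injective {R : Type*} : Function.Injective (F : DecisionRule A k R → _) := by
  rintro ⟨F, _, _⟩ ⟨F', _, _⟩ (rfl : F = F')
  rfl

variable (f : DecisionRule A k ℕ)

def IndependentOfSymmetric : Prop :=
  ∀ (P : Vote A → ℕ) (ℓ : ℕ) (C1 C2 : Committee A k),
    f.F (P + ℓ • (fun _ => (1 : ℕ))) C1 C2 = f.F P C1 C2

def Homogeneous : Prop :=
  ∀ (P : Vote A → ℕ) (ℓ : ℕ), 0 < ℓ → ∀ (C1 C2 : Committee A k),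
    f.F (ℓ • P) C1 C2 = f.F P C1 C2

variable {f}

theorem F_eq_of_isNatRep (hind : f.IndependentOfSymmetric) (hhom : f.Homogeneous)
    {Q : Vote A → ℚ} {P₁ P₂ : Vote A → ℕ} (h₁ : IsNatRep Q P₁) (h₂ : IsNatRep Q P₂) :
    f.F P₁ = f.F P₂ := by
  obtain ⟨d₁, d₂, m₁, m₂, hd₁, hd₂, h⟩ := h₁.exists_nsmul_add_eq h₂
  funext C1 C2
  calc f.F P₁ C1 C2 = f.F (d₂ • P₁ + m₂ • fun _ => 1) C1 C2 := by rw [hind, hhom _ _ hd₂]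
    _ = f.F (d₁ • P₂ + m₁ • fun _ => 1) C1 C2 := by rw [h]
    _ = f.F P₂ C1 C2 := by rw [hind, hhom _ _ hd₁]

variable (f)

noncomputable def extendRat : DecisionRule A k ℚ where
  F Q := f.F (exists_isNatRep Q).choose
  antisymm _ := f.antisymm _
  mem_range _ := f.mem_range _

variable {f}

theorem extendRat_F_of_isNatRep (hind : f.IndependentOfSymmetric) (hhom : f.Homogeneous)
    {Q : Vote A → ℚ} {P : Vote A → ℕ} (h : IsNatRep Q P) : f.extendRat.F Q = f.F P :=
  F_eq_of_isNatRep hind hhom (exists_isNatRep Q).choose_spec h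

theorem F_eq_of_isNatRep_of_invariant {g : DecisionRule A k ℚ}
    (hnat : ∀ (P : Vote A → ℕ) (C1 C2 : Committee A k),
      g.F (fun v => (P v : ℚ)) C1 C2 = f.F P C1 C2)
    (hinv : ∀ (Q : Vote A → ℚ) (ℓ : ℕ), 0 < ℓ → ∀ (C1 C2 : Committee A k),
      g.F (Q - ℓ • (fun _ => (1 : ℚ))) C1 C2 = g.F Q C1 C2 ∧
      g.F ((ℓ : ℚ)⁻¹ • Q) C1 C2 = g.F Q C1 C2)
    {Q : Vote A → ℚ} {P : Vote A → ℕ} (h : IsNatRep Q P) : g.F Q = f.F P := by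
  obtain ⟨n, d, hd, rfl⟩ := h
  funext C1 C2
  rw [(hinv _ d hd C1 C2).2, ← hnat]
  rcases n.eq_zero_or_pos with rfl | hn
  · simp
  · exact (hinv _ n hn C1 C2).1

end DecisionRule

theorem unique_extension_to_rationals_general {A : Type*} [Fintype A] [DecidableEq A] {k : ℕ}
    (f : DecisionRule A k ℕ)
    (hind : ∀ (P : Vote A → ℕ) (ℓ : ℕ) (C1 C2 : Committee A k),
      f.F (P + ℓ • (fun _ => (1 : ℕ))) C1 C2 = f.F P C1 C2)
    (hhom : ∀ (P : Vote A → ℕ) (ℓ : ℕ), 0 < ℓ → ∀ (C1 C2 : Committee A k),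
      f.F (ℓ • P) C1 C2 = f.F P C1 C2) :
    ∃! g : DecisionRule A k ℚ,
      (∀ (P : Vote A → ℕ) (C1 C2 : Committee A k),
        g.F (fun v => (P v : ℚ)) C1 C2 = f.F P C1 C2) ∧
      (∀ (Q : Vote A → ℚ) (ℓ : ℕ), 0 < ℓ → ∀ (C1 C2 : Committee A k),
        g.F (Q - ℓ • (fun _ => (1 : ℚ))) C1 C2 = g.F Q C1 C2 ∧
        g.F ((ℓ : ℚ)⁻¹ • Q) C1 C2 = g.F Q C1 C2) := by
  have hext : ∀ {Q : Vote A → ℚ} {P}, IsNatRep Q P → f.extendRat.F Q = f.F P :=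
    DecisionRule.extendRat_F_of_isNatRep hind hhom
  refine ⟨f.extendRat, ⟨fun P C1 C2 => ?_, fun Q ℓ hℓ C1 C2 => ⟨?_, ?_⟩⟩, ?_⟩
  · rw [hext (IsNatRep.nat_cast P)]
  · obtain ⟨P, hP⟩ := exists_isNatRep Q
    rw [hext hP, hext (hP.sub_nsmul_one ℓ)]
  · obtain ⟨P, hP⟩ := exists_isNatRep Q
    rw [hext hP, hext (hP.inv_smul hℓ)]
  · rintro g ⟨hnat, hinv⟩
    refine DecisionRule.F_injective (funext fun Q => ?_)
    obtain ⟨P, hP⟩ := exists_isNatRep Q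
    rw [hext hP, DecisionRule.F_eq_of_isNatRep_of_invariant hnat hinv hP]

/-- **Lemma (Young, Merlin: unique extension to rational voting situations).**
Let `f` be a neutral `k`-decision rule on integer voting situations that is independent of
symmetric profiles and homogeneous. Then there is a unique `k`-decision rule `g` on
rational voting situations that agrees with `f` on integer voting situations and satisfies
`g(Q - ℓ·e) = g(Q)` and `g(Q/ℓ) = g(Q)` for every rational voting situation `Q` and every
positive integer `ℓ`, where `e` is the null profile assigning multiplicity `1` to every
vote. -/
theorem unique_extension_to_rationals {A : Type*} [Fintype A] [DecidableEq A] {k : ℕ}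
    (hk : k ≤ Fintype.card A) (f : DecisionRule A k ℕ) (hneu : f.Neutral)
    (hind : ∀ (P : Vote A → ℕ) (ℓ : ℕ) (C1 C2 : Committee A k),
      f.F (P + ℓ • (fun _ => (1 : ℕ))) C1 C2 = f.F P C1 C2)
    (hhom : ∀ (P : Vote A → ℕ) (ℓ : ℕ), 0 < ℓ → ∀ (C1 C2 : Committee A k),
      f.F (ℓ • P) C1 C2 = f.F P C1 C2) :
    ∃! g : DecisionRule A k ℚ,
      (∀ (P : Vote A → ℕ) (C1 C2 : Committee A k),
        g.F (fun v => (P v : ℚ)) C1 C2 = f.F P C1 C2) ∧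
      (∀ (Q : Vote A → ℚ) (ℓ : ℕ), 0 < ℓ → ∀ (C1 C2 : Committee A k),
        g.F (Q - ℓ • (fun _ => (1 : ℚ))) C1 C2 = g.F Q C1 C2 ∧
        g.F ((ℓ : ℚ)⁻¹ • Q) C1 C2 = g.F Q C1 C2) :=
  unique_extension_to_rationals_general f hind hhom
end

section
/- Every neutral and consistent k-decision rule f on integer voting situations is homogeneous and independent of symmetric profiles; that is, for every P ∈ ℕ^L, every positive integer ℓ, and every ℓ' ∈ ℕ, it holds that f(ℓ·P) = f(P) and f(P + ℓ'·e) = f(P), where e is the voting situation assigning multiplicity 1 to every vote. -/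
open Finset

/-
A constant profile is fixed by every candidate permutation, and for any two committees there is
a permutation exchanging them (an involution swapping `C₁ \ C₂` with `C₂ \ C₁`); neutrality thus
forces `f(c, …)(C₁, C₂) = f(c, …)(C₂, C₁)`, which by antisymmetry is `0`. Consistency makes adding
a profile on which the verdict is a tie, or the same as the current one, harmless: this gives
independence of `ℓ' • e` and, by induction on `ℓ`, homogeneity.
-/

section Swap

variable {A : Type*} [DecidableEq A]

def swapSdiff (s t : Finset A) (g : ↥(s \ t) ≃ ↥(t \ s)) (x : A) : A :=
  if hs : x ∈ s \ t then g ⟨x, hs⟩ else if ht : x ∈ t \ s then g.symm ⟨x, ht⟩ else x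

lemma swapSdiff_involutive (s t : Finset A) (g : ↥(s \ t) ≃ ↥(t \ s)) :
    Function.Involutive (swapSdiff s t g) := by
  intro x
  by_cases hs : x ∈ s \ t
  · have hg : (g ⟨x, hs⟩ : A) ∉ s \ t :=
      disjoint_right.mp disjoint_sdiff_sdiff (g ⟨x, hs⟩).2
    simp [swapSdiff, hs, hg]
  · by_cases ht : x ∈ t \ s
    · simp [swapSdiff, hs, ht, (g.symm ⟨x, ht⟩).2]
    · simp [swapSdiff, hs, ht]

lemma image_swapSdiff_subset (s t : Finset A) (g : ↥(s \ t) ≃ ↥(t \ s)) :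
    s.image (swapSdiff s t g) ⊆ t := by
  simp only [image_subset_iff]
  intro x hx
  by_cases hs : x ∈ s \ t
  · simpa [swapSdiff, hs] using (mem_sdiff.mp (g ⟨x, hs⟩).2).1
  · have hxt : x ∈ t := by simpa [hx] using hs
    simpa [swapSdiff, hs, hx] using hxt

lemma Finset.exists_perm_image_eq_and_image_eq {s t : Finset A} (h : s.card = t.card) :
    ∃ σ : Equiv.Perm A, s.image σ = t ∧ t.image σ = s := by
  let τ := swapSdiff s t (equivOfCardEq (card_sdiff_comm h))
  have hτ : Function.Involutive τ := swapSdiff_involutive _ _ _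
  have hst : s.image τ = t :=
    eq_of_subset_of_card_le (image_swapSdiff_subset _ _ _)
      (by rw [card_image_of_injective _ hτ.injective, h])
  refine ⟨hτ.toPerm, hst, ?_⟩
  simp only [Function.Involutive.coe_toPerm, ← hst, image_image, hτ.comp_self, image_id]

end Swap

namespace DecisionRule

variable {A : Type*} [Fintype A] [DecidableEq A] {k : ℕ} {R : Type*} {f : DecisionRule A k R}

lemma Neutral.F_const_eq_zero (hneu : f.Neutral) (c : R) (C1 C2 : Committee A k) :
    f.F (fun _ => c) C1 C2 = 0 := by
  obtain ⟨σ, h12, h21⟩ := Finset.exists_perm_image_eq_and_image_eq (C1.2.trans C2.2.symm)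
  have hswap := hneu σ (fun _ => c) C1 C2
  rw [show permComm σ C1 = C2 from Subtype.ext h12,
    show permComm σ C2 = C1 from Subtype.ext h21] at hswap
  have := f.antisymm (fun _ => c) C1 C2
  change f.F (fun _ => c) C2 C1 = _ at hswap
  omega

variable [AddCommMonoid R]

lemma Consistent.F_add_of_F_eq_zero_or_eq (hcons : f.Consistent) {P Q : Vote A → R}
    {C1 C2 : Committee A k} (hQ : f.F Q C1 C2 = 0 ∨ f.F Q C1 C2 = f.F P C1 C2) :
    f.F (P + Q) C1 C2 = f.F P C1 C2 := by
  have hP := f.antisymm P C1 C2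
  have hQ' := f.antisymm Q C1 C2
  have hPQ := f.antisymm (P + Q) C1 C2
  rcases f.mem_range P C1 C2 with hPneg | hP0 | hP1
  · have := (hcons P Q C2 C1).1 (by omega) (by omega)
    omega
  · have h12 := (hcons P Q C1 C2).2 (by omega) (by omega)
    have h21 := (hcons P Q C2 C1).2 (by omega) (by omega)
    omega
  · have := (hcons P Q C1 C2).1 hP1 (by omega)
    omega

lemma Consistent.F_nsmul (hcons : f.Consistent) (P : Vote A → R) (C1 C2 : Committee A k)
    {n : ℕ} (hn : 0 < n) : f.F (n • P) C1 C2 = f.F P C1 C2 := by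
  induction n, hn using Nat.le_induction with
  | base => rw [Nat.succ_eq_add_one, zero_add, one_nsmul]
  | succ n _ ih => rw [succ_nsmul', hcons.F_add_of_F_eq_zero_or_eq (Or.inr ih)]

lemma Consistent.F_add_nsmul_of_F_eq_zero (hcons : f.Consistent) {P Q : Vote A → R}
    {C1 C2 : Committee A k} (hQ : f.F Q C1 C2 = 0) (n : ℕ) :
    f.F (P + n • Q) C1 C2 = f.F P C1 C2 := by
  induction n with
  | zero => rw [zero_nsmul, add_zero]
  | succ n ih => rw [succ_nsmul, ← add_assoc, hcons.F_add_of_F_eq_zero_or_eq (Or.inl hQ), ih]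

end DecisionRule

theorem neutral_consistent_implies_homogeneous_and_independent_general
    {A : Type*} [Fintype A] [DecidableEq A] {k : ℕ}
    (f : DecisionRule A k ℕ) (hneu : f.Neutral) (hcons : f.Consistent) :
    ∀ (P : Vote A → ℕ) (ℓ ℓ' : ℕ) (C1 C2 : Committee A k), 0 < ℓ →
      f.F (ℓ • P) C1 C2 = f.F P C1 C2 ∧
      f.F (P + ℓ' • (fun _ => (1 : ℕ))) C1 C2 = f.F P C1 C2 :=
  fun P _ ℓ' C1 C2 hℓ =>
    ⟨hcons.F_nsmul P C1 C2 hℓ, hcons.F_add_nsmul_of_F_eq_zero (hneu.F_const_eq_zero 1 C1 C2) ℓ'⟩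

/-- Every neutral and consistent `k`-decision rule on integer voting situations is
homogeneous and independent of symmetric profiles. -/
theorem neutral_consistent_implies_homogeneous_and_independent
    {A : Type*} [Fintype A] [DecidableEq A] {k : ℕ} (hk : k ≤ Fintype.card A)
    (f : DecisionRule A k ℕ) (hneu : f.Neutral) (hcons : f.Consistent) :
    ∀ (P : Vote A → ℕ) (ℓ ℓ' : ℕ) (C1 C2 : Committee A k), 0 < ℓ →
      f.F (ℓ • P) C1 C2 = f.F P C1 C2 ∧
      f.F (P + ℓ' • (fun _ => (1 : ℕ))) C1 C2 = f.F P C1 C2 :=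
  neutral_consistent_implies_homogeneous_and_independent_general f hneu hcons
end

section
/- Let C1 and C2 be two size-k committees and let P be a (C1,C2)-symmetric rational voting situation. Then: (1) α_{C1,C2}(P) is the zero vector; and (2) for every neutral, transitive k-decision rule f on rational voting situations, C1 =_P C2. -/
open Finset

/-- A rational voting situation `P` is `(C1, C2)`-symmetric if there is a candidate
permutation `σ` with `σP = P` and a sequence of committees `F 1, …, F x` with
`C1 = F 1 = F x`, `C2 = F 2`, and `σ(F i) = F (i+1)` for `1 ≤ i < x`. -/
def CCSymmetric {A : Type*} [Fintype A] [DecidableEq A] {k : ℕ}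
    (C1 C2 : Committee A k) (P : Vote A → ℚ) : Prop :=
  ∃ (σ : Equiv.Perm A) (x : ℕ) (Fs : ℕ → Finset A),
    2 ≤ x ∧ permSitu σ P = P ∧
    Fs 1 = C1.1 ∧ Fs x = C1.1 ∧ Fs 2 = C2.1 ∧
    ∀ i, 1 ≤ i → i < x → Fs (i + 1) = (Fs i).image σ

/-! The symmetry `σ` fixes `P` and maps `C1` to `C2`, so relabelling the votes by `σ` shows
that `C1` and `C2` occupy every position set equally often, i.e. `α_{C1,C2}(P) = 0`.
For a neutral rule, `σP = P` makes the comparison of `σⁱ C1` with `σⁱ⁺¹ C1` the same for all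
`i`; as the orbit of `C1` returns to `C1`, transitivity carries a strict preference
`C1 ≻ C2` around the cycle to `C2 ⪰ C1`, which is impossible. -/

section Symmetric

variable {A : Type*} [Fintype A] [DecidableEq A] {k : ℕ}

theorem Vote.pos_trans (σ : Equiv.Perm A) (π : Vote A) (C : Finset A) :
    Vote.pos (σ.trans π) C = π.pos (C.image σ) := by
  simp only [Vote.pos, Finset.image_image]
  rfl

theorem alphaFun_image_eq_zero {σ : Equiv.Perm A} {P : Vote A → ℚ} (hσ : permSitu σ P = P)
    (C : Finset A) (I : Finset (Fin (Fintype.card A))) : alphaFun C (C.image σ) P I = 0 := by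
  have hcount : ∑ π : Vote A, P π * (if π.pos C = I then 1 else 0) =
      ∑ π : Vote A, P π * (if π.pos (C.image σ) = I then 1 else 0) := by
    -- `σ.symm.equivCongr (Equiv.refl _)` is the reindexing `π ↦ σ.trans π`
    refine (Fintype.sum_equiv (σ.symm.equivCongr (Equiv.refl _)) _ _ fun π => ?_).symm
    change _ = P (σ.trans π) * (if Vote.pos (σ.trans π) C = I then 1 else 0)
    rw [Vote.pos_trans, show P (σ.trans π) = P π from congrFun hσ π]
  simp only [alphaFun, mul_sub, Finset.sum_sub_distrib, hcount, sub_self]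

namespace DecisionRule

variable {R : Type*} {f : DecisionRule A k R} {P : Vote A → R}

theorem F_self (f : DecisionRule A k R) (P : Vote A → R) (C : Committee A k) : f.F P C C = 0 := by
  have := f.antisymm P C C
  omega

theorem Neutral.F_iterate_permComm (hf : f.Neutral) {σ : Equiv.Perm A} (hσ : permSitu σ P = P)
    (n : ℕ) (C D : Committee A k) :
    f.F P ((permComm σ)^[n] C) ((permComm σ)^[n] D) = f.F P C D := by
  induction n with
  | zero => rfl
  | succ n ih =>
    rw [Function.iterate_succ_apply', Function.iterate_succ_apply', ← ih,
      ← hf σ P ((permComm σ)^[n] C), hσ]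

theorem Transitive.nonneg_F_of_chain (hf : f.Transitive) {D : ℕ → Committee A k}
    (hD : ∀ i, 0 ≤ f.F P (D i) (D (i + 1))) {i j : ℕ} (hij : i ≤ j) :
    0 ≤ f.F P (D i) (D j) :=
  haveI : Std.Refl fun C C' => 0 ≤ f.F P C C' := ⟨fun C => (f.F_self P C).ge⟩
  haveI : IsTrans _ fun C C' => 0 ≤ f.F P C C' := ⟨hf P⟩
  Nat.rel_of_forall_rel_succ_of_le (fun C C' => 0 ≤ f.F P C C') hD hij

theorem Transitive.nonneg_F_of_chain_rev (hf : f.Transitive) {D : ℕ → Committee A k}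
    (hD : ∀ i, 0 ≤ f.F P (D (i + 1)) (D i)) {i j : ℕ} (hij : i ≤ j) :
    0 ≤ f.F P (D j) (D i) :=
  haveI : Std.Refl fun C C' => 0 ≤ f.F P C' C := ⟨fun C => (f.F_self P C).ge⟩
  haveI : IsTrans _ fun C C' => 0 ≤ f.F P C' C := ⟨fun _ _ _ h h' => hf P _ _ _ h' h⟩
  Nat.rel_of_forall_rel_succ_of_le (fun C C' => 0 ≤ f.F P C' C) hD hij

/- Going once around the cycle turns `D 0 ⪰ D 1` into `D 1 ⪰ D 0`, and `D 1 ⪰ D 0` into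
`D 0 ⪰ D 1`. -/
theorem Transitive.F_eq_zero_of_cycle (hf : f.Transitive) {D : ℕ → Committee A k} {n : ℕ}
    (hn : 1 ≤ n) (hDn : D n = D 0) (hD : ∀ i, f.F P (D i) (D (i + 1)) = f.F P (D 0) (D 1)) :
    f.F P (D 0) (D 1) = 0 := by
  have hanti := f.antisymm P (D 0) (D 1)
  rcases le_total 0 (f.F P (D 0) (D 1)) with hc | hc
  · have := hf.nonneg_F_of_chain (fun i => (hD i).symm ▸ hc) hn
    rw [hDn] at this
    omega
  · have := hf.nonneg_F_of_chain_rev (D := D) (fun i => by rw [f.antisymm, hD i]; omega) hn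
    rw [hDn] at this
    omega

end DecisionRule

theorem CCSymmetric.exists_orbit {C1 C2 : Committee A k} {P : Vote A → ℚ}
    (hP : CCSymmetric C1 C2 P) : ∃ σ : Equiv.Perm A, permSitu σ P = P ∧ permComm σ C1 = C2 ∧
      ∃ n, 1 ≤ n ∧ (permComm σ)^[n] C1 = C1 := by
  obtain ⟨σ, x, Fs, hx, hσ, h1, hx1, h2, hstep⟩ := hP
  have horbit : ∀ i, i < x → Fs (i + 1) = ((permComm σ)^[i] C1).1 := by
    intro i
    induction i with
    | zero => exact fun _ => h1
    | succ i ih =>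
      intro hi
      rw [hstep (i + 1) (by omega) hi, ih (by omega), Function.iterate_succ_apply']
      rfl
  refine ⟨σ, hσ, Subtype.ext ?_, x - 1, by omega, Subtype.ext ?_⟩
  · rw [← h2, horbit 1 (by omega)]
    rfl
  · rw [← horbit (x - 1) (by omega), Nat.sub_add_cancel (by omega), hx1]

end Symmetric

theorem ccSymmetric_alpha_zero_and_indifferent_general {A : Type*} [Fintype A] [DecidableEq A]
    {k : ℕ} (C1 C2 : Committee A k)
    (P : Vote A → ℚ) (hP : CCSymmetric C1 C2 P) :
    (∀ I : Finset (Fin (Fintype.card A)), alphaFun C1.1 C2.1 P I = 0) ∧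
    (∀ f : DecisionRule A k ℚ, f.Neutral → f.Transitive → f.F P C1 C2 = 0) := by
  obtain ⟨σ, hσ, rfl, n, hn, hcycle⟩ := hP.exists_orbit
  refine ⟨alphaFun_image_eq_zero hσ C1.1, fun f hneutral htrans => ?_⟩
  exact htrans.F_eq_zero_of_cycle (D := fun i => (permComm σ)^[i] C1) hn hcycle
    fun i => by
      simp only [Function.iterate_succ_apply]
      exact hneutral.F_iterate_permComm hσ i _ _

/-- **Properties of `(C1,C2)`-symmetric voting situations.**
If `P` is a `(C1,C2)`-symmetric rational voting situation, then (1) `α_{C1,C2}(P)` is the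
zero vector, and (2) every neutral transitive `k`-decision rule on rational voting
situations declares `C1` and `C2` indifferent at `P`. -/
theorem ccSymmetric_alpha_zero_and_indifferent {A : Type*} [Fintype A] [DecidableEq A]
    {k : ℕ} (hk : k ≤ Fintype.card A) (C1 C2 : Committee A k)
    (P : Vote A → ℚ) (hP : CCSymmetric C1 C2 P) :
    (∀ I : Finset (Fin (Fintype.card A)), alphaFun C1.1 C2.1 P I = 0) ∧
    (∀ f : DecisionRule A k ℚ, f.Neutral → f.Transitive → f.F P C1 C2 = 0) :=
  ccSymmetric_alpha_zero_and_indifferent_general C1 C2 P hP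
end
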